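/- arXiv:1410.0402 — 5 statements merged into one kernel-verified Lean document; each statement's English description precedes it below -/
import Mathlib

section
/- Let X be a uniformly convex real Banach space, let p ∈ (1, ∞), and let A : X → X* be a (not necessarily linear) map into the continuous dual of X such that A(u)(u) = ‖u‖^p and |A(u)(v)| ≤ ‖u‖^{p−1} ‖v‖ for all u, v ∈ X. Then A is of type (S): every sequence (u_j) in X such that u_j converges weakly to some u ∈ X and A(u_j)(u_j − u) → 0 has a subsequence that converges strongly to u. -/
open Filter Topology

theorem type_S_of_homogeneous_bound
    {X : Type*} [NormedAddCommGroup X] [NormedSpace ℝ X] [UniformConvexSpace X]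
    [CompleteSpace X] (p : ℝ) (hp : 1 < p)
    (A : X → (X →L[ℝ] ℝ))
    (hA1 : ∀ u : X, A u u = ‖u‖ ^ p)
    (hA2 : ∀ u v : X, |A u v| ≤ ‖u‖ ^ (p - 1) * ‖v‖)
    (uj : ℕ → X) (u : X)
    (hweak : ∀ f : X →L[ℝ] ℝ, Tendsto (fun j => f (uj j)) atTop (𝓝 (f u)))
    (hAconv : Tendsto (fun j => A (uj j) (uj j - u)) atTop (𝓝 0)) :
    ∃ φ : ℕ → ℕ, StrictMono φ ∧ Tendsto (fun j => uj (φ j)) atTop (𝓝 u) := by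
  refine ⟨id, strictMono_id, ?_⟩
  simp only [id]
  have hp0 : (0:ℝ) < p := lt_trans one_pos hp
  have hp1 : (0:ℝ) ≤ p - 1 := by linarith
  -- Key inequality: if 0 < b ≤ ‖uj j‖ and ‖u‖ ≤ ‖uj j‖ - ε then
  -- A (uj j) (uj j - u) ≥ b^(p-1) * ε.
  have key : ∀ j : ℕ, 0 < ‖uj j‖ →
      ‖uj j‖ ^ (p-1) * (‖uj j‖ - ‖u‖) ≤ A (uj j) (uj j - u) := by
    intro j hj
    have h1 : (A (uj j)) (uj j - u) = ‖uj j‖ ^ p - A (uj j) u := by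
      rw [map_sub, hA1]
    have h2 : A (uj j) u ≤ ‖uj j‖ ^ (p-1) * ‖u‖ :=
      (le_abs_self _).trans (hA2 (uj j) u)
    have h3 : ‖uj j‖ ^ p = ‖uj j‖ ^ (p-1) * ‖uj j‖ := by
      rw [← Real.rpow_add_one hj.ne' (p-1)]
      norm_num
    rw [h1, h3]
    nlinarith
  by_cases hu : u = 0
  · -- Case u = 0 : ‖uj j‖ ^ p → 0, hence ‖uj j‖ → 0.
    subst hu
    have h : Tendsto (fun j => ‖uj j‖ ^ p) atTop (𝓝 0) := by
      have := hAconv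
      simp only [sub_zero, hA1] at this
      exact this
    have hcont : ContinuousAt (fun x : ℝ => x ^ p⁻¹) 0 :=
      (Real.continuousAt_rpow_const 0 p⁻¹ (Or.inr (by positivity)))
    have h2 : Tendsto (fun j => (‖uj j‖ ^ p) ^ p⁻¹) atTop (𝓝 ((0:ℝ) ^ p⁻¹)) :=
      hcont.tendsto.comp h
    rw [Real.zero_rpow (by positivity)] at h2
    have h3 : (fun j => (‖uj j‖ ^ p) ^ p⁻¹) = fun j => ‖uj j‖ := by
      funext j
      rw [← Real.rpow_mul (norm_nonneg _), mul_inv_cancel₀ hp0.ne', Real.rpow_one]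
    rw [h3] at h2
    exact tendsto_zero_iff_norm_tendsto_zero.2 (by simpa using h2)
  · have hu0 : (0:ℝ) < ‖u‖ := norm_pos_iff.2 hu
    obtain ⟨f, hf1, hfu⟩ := exists_dual_vector ℝ u hu0.ne'
    have hfle : ∀ v : X, f v ≤ ‖v‖ := fun v => by
      calc f v ≤ |f v| := le_abs_self _
      _ = ‖f v‖ := (Real.norm_eq_abs _).symm
      _ ≤ ‖f‖ * ‖v‖ := f.le_opNorm v
      _ = ‖v‖ := by rw [hf1, one_mul]
    have hfu' : f u = ‖u‖ := by exact_mod_cast hfu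
    -- Step 1 : ‖uj j‖ → ‖u‖
    have hnorm : Tendsto (fun j => ‖uj j‖) atTop (𝓝 ‖u‖) := by
      rw [tendsto_order]
      constructor
      · intro a ha
        have := (hweak f).eventually (eventually_gt_nhds (by rwa [hfu'] : a < f u))
        filter_upwards [this] with j hj
        exact lt_of_lt_of_le hj (hfle (uj j))
      · intro b hb
        have hb0 : 0 < b := lt_trans hu0 hb
        have hε : 0 < b ^ (p-1) * (b - ‖u‖) := by
          have : (0:ℝ) < b ^ (p-1) := Real.rpow_pos_of_pos hb0 _
          nlinarith
        have := hAconv.eventually (eventually_lt_nhds hε)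
        filter_upwards [this] with j hj
        by_contra hcon
        push_neg at hcon
        have hbj : b ≤ ‖uj j‖ := hcon
        have hj0 : 0 < ‖uj j‖ := lt_of_lt_of_le hb0 hbj
        have h1 : b ^ (p-1) * (b - ‖u‖) ≤ ‖uj j‖ ^ (p-1) * (‖uj j‖ - ‖u‖) := by
          have h2 : b ^ (p-1) ≤ ‖uj j‖ ^ (p-1) :=
            Real.rpow_le_rpow hb0.le hbj hp1
          nlinarith [Real.rpow_pos_of_pos hb0 (p-1)]
        exact absurd (lt_of_le_of_lt (h1.trans (key j hj0)) hj) (lt_irrefl _)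
    -- Step 2 : ‖uj j + u‖ → 2‖u‖
    have hsum : Tendsto (fun j => ‖uj j + u‖) atTop (𝓝 (2 * ‖u‖)) := by
      have hlo : Tendsto (fun j => f (uj j) + f u) atTop (𝓝 (2 * ‖u‖)) := by
        have := (hweak f).add_const (f u)
        rw [hfu'] at this
        convert this using 2
        rw [hfu']; ring
      have hhi : Tendsto (fun j => ‖uj j‖ + ‖u‖) atTop (𝓝 (2 * ‖u‖)) := by
        have := hnorm.add_const ‖u‖
        convert this using 2
        ring
      refine tendsto_of_tendsto_of_tendsto_of_le_of_le hlo hhi ?_ ?_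
      · intro j
        calc f (uj j) + f u = f (uj j + u) := by rw [map_add]
        _ ≤ ‖uj j + u‖ := hfle _
      · intro j; exact norm_add_le _ _
    -- Rescaled sequence yj with ‖yj‖ ≤ ‖u‖
    set y : ℕ → X := fun j => (‖u‖ * ‖uj j‖⁻¹) • uj j with hy
    have hyle : ∀ j, ‖y j‖ ≤ ‖u‖ := by
      intro j
      rcases eq_or_ne (‖uj j‖) 0 with h | h
      · simp [hy, h, norm_smul, hu0.le]
      · rw [hy, norm_smul, Real.norm_eq_abs, abs_of_nonneg (by positivity)]
        rw [mul_assoc, inv_mul_cancel₀ h, mul_one]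
    -- y j - uj j → 0
    have hdiff : Tendsto (fun j => y j - uj j) atTop (𝓝 0) := by
      rw [tendsto_zero_iff_norm_tendsto_zero]
      have heq : ∀ j, ‖y j - uj j‖ = |‖u‖ * ‖uj j‖⁻¹ - 1| * ‖uj j‖ := by
        intro j
        rw [hy]
        rw [show (‖u‖ * ‖uj j‖⁻¹) • uj j - uj j = (‖u‖ * ‖uj j‖⁻¹ - 1) • uj j by
          rw [sub_smul, one_smul]]
        rw [norm_smul, Real.norm_eq_abs]
      simp only [heq]
      have : Tendsto (fun j => |‖u‖ * ‖uj j‖⁻¹ - 1| * ‖uj j‖) atTop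
          (𝓝 (|‖u‖ * ‖u‖⁻¹ - 1| * ‖u‖)) := by
        exact ((((hnorm.inv₀ hu0.ne').const_mul ‖u‖).sub_const 1).abs).mul hnorm
      rw [mul_inv_cancel₀ hu0.ne'] at this
      simpa using this
    -- ‖y j + u‖ → 2‖u‖
    have hsum' : Tendsto (fun j => ‖y j + u‖) atTop (𝓝 (2 * ‖u‖)) := by
      have h1 : Tendsto (fun j => ‖y j + u‖ - ‖uj j + u‖) atTop (𝓝 0) := by
        refine squeeze_zero_norm (fun j => ?_)
          (tendsto_zero_iff_norm_tendsto_zero.1 hdiff)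
        rw [Real.norm_eq_abs]
        calc |‖y j + u‖ - ‖uj j + u‖| ≤ ‖(y j + u) - (uj j + u)‖ :=
            abs_norm_sub_norm_le _ _
        _ = ‖y j - uj j‖ := by rw [add_sub_add_right_eq_sub]
      have := h1.add hsum
      simpa using this
    -- uniform convexity : y j → u
    have hyu : Tendsto y atTop (𝓝 u) := by
      rw [Metric.tendsto_atTop]
      intro ε hε
      obtain ⟨δ, hδ, hconv⟩ :=
        exists_forall_closed_ball_dist_add_le_two_mul_sub X hε ‖u‖
      have hev : ∀ᶠ j in atTop, 2 * ‖u‖ - δ < ‖y j + u‖ :=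
        hsum'.eventually (eventually_gt_nhds (by linarith))
      rw [eventually_atTop] at hev
      obtain ⟨N, hN⟩ := hev
      refine ⟨N, fun n hn => ?_⟩
      rw [dist_eq_norm]
      by_contra hcon
      push_neg at hcon
      have := hconv (hyle n) le_rfl hcon
      exact absurd (lt_of_lt_of_le (hN n hn) this) (by linarith)
    -- conclude : uj j = y j - (y j - uj j) → u - 0 = u
    have := hyu.sub hdiff
    simpa using this
end

section
/- Let N ⊆ H be a linear subspace and λ > 0 a real number with ‖v‖² ≤ λ ‖v‖_{L²}² for all v ∈ N, and let a > λ and b > λ. Then for every w ∈ H the function v ↦ I(v + w, a, b) is strictly concave on N: for all v₁, v₂ ∈ N with v₁ ≠ v₂ and all t ∈ (0, 1), I((1 − t) v₁ + t v₂ + w, a, b) > (1 − t) I(v₁ + w, a, b) + t I(v₂ + w, a, b). -/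
open MeasureTheory RealInnerProductSpace

private lemma maxsq_convex' (t s₁ s₂ : ℝ) (ht0 : 0 ≤ t) (ht1 : t ≤ 1) :
    (max ((1-t)*s₁ + t*s₂) 0)^2 ≤ (1-t) * (max s₁ 0)^2 + t * (max s₂ 0)^2 := by
  have h1 : (0:ℝ) ≤ max s₁ 0 := le_max_right _ _
  have h2 : (0:ℝ) ≤ max s₂ 0 := le_max_right _ _
  have hm : max ((1-t)*s₁ + t*s₂) 0 ≤ (1-t) * max s₁ 0 + t * max s₂ 0 := by
    apply max_le
    · have := le_max_left s₁ 0; have := le_max_left s₂ 0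
      nlinarith
    · nlinarith
  have hnn : (0:ℝ) ≤ max ((1-t)*s₁ + t*s₂) 0 := le_max_right _ _
  have step1 : (max ((1-t)*s₁ + t*s₂) 0)^2 ≤ ((1-t) * max s₁ 0 + t * max s₂ 0)^2 :=
    pow_le_pow_left₀ hnn hm 2
  have step2 : ((1-t) * max s₁ 0 + t * max s₂ 0)^2 ≤ (1-t) * (max s₁ 0)^2 + t * (max s₂ 0)^2 := by
    nlinarith [sq_nonneg (max s₁ 0 - max s₂ 0), mul_nonneg ht0 (sub_nonneg.mpr ht1)]
  linarith

private lemma pw_ineq (A B m t s₁ s₂ : ℝ) (hA : m ≤ A) (hB : m ≤ B)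
    (ht0 : 0 ≤ t) (ht1 : t ≤ 1) :
    m * (t*(1-t)) * (s₁ - s₂)^2 +
        (A * (max ((1-t)*s₁ + t*s₂) 0)^2 + B * (max (-((1-t)*s₁ + t*s₂)) 0)^2)
      ≤ (1-t) * (A * (max s₁ 0)^2 + B * (max (-s₁) 0)^2)
        + t * (A * (max s₂ 0)^2 + B * (max (-s₂) 0)^2) := by
  have key : ∀ s : ℝ, (max s 0)^2 + (max (-s) 0)^2 = s^2 := by
    intro s; rcases le_total s 0 with h | h
    · rw [max_eq_right h, max_eq_left (by linarith)]; ring_nf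
    · rw [max_eq_left h, max_eq_right (by linarith)]; ring
  have c1 := maxsq_convex' t s₁ s₂ ht0 ht1
  have c2 := maxsq_convex' t (-s₁) (-s₂) ht0 ht1
  have e2 : (1-t)*(-s₁) + t*(-s₂) = -((1-t)*s₁ + t*s₂) := by ring
  rw [e2] at c2
  have k1 := key s₁; have k2 := key s₂; have k3 := key ((1-t)*s₁ + t*s₂)
  have hA' := mul_le_mul_of_nonneg_left c1 (by linarith : (0:ℝ) ≤ A - m)
  have hB' := mul_le_mul_of_nonneg_left c2 (by linarith : (0:ℝ) ≤ B - m)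
  have hq : m * ((1-t)*s₁^2 + t*s₂^2 - ((1-t)*s₁+t*s₂)^2) = m * (t*(1-t)) * (s₁-s₂)^2 := by ring
  have mk1 : m*(1-t)*((max s₁ 0)^2 + (max (-s₁) 0)^2) = m*(1-t)*s₁^2 := by rw [k1]
  have mk2 : m*t*((max s₂ 0)^2 + (max (-s₂) 0)^2) = m*t*s₂^2 := by rw [k2]
  have mk3 : m*((max ((1-t)*s₁ + t*s₂) 0)^2 + (max (-((1-t)*s₁ + t*s₂)) 0)^2)
      = m*((1-t)*s₁+t*s₂)^2 := by rw [k3]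
  linarith [hA', hB', hq, mk1, mk2, mk3]

private lemma sq_integrable' {α : Type*} [MeasurableSpace α] {μ : Measure α}
    (f : Lp ℝ 2 μ) : Integrable (fun x => (f x)^2) μ := by
  have h := MeasureTheory.L2.integrable_inner (𝕜 := ℝ) f f
  simpa [sq, RCLike.inner_apply, conj_trivial] using h

private lemma norm_sq_eq_integral' {α : Type*} [MeasurableSpace α] {μ : Measure α}
    (f : Lp ℝ 2 μ) : ‖f‖^2 = ∫ x, (f x)^2 ∂μ := by
  have h := MeasureTheory.L2.inner_def (𝕜 := ℝ) f f
  rw [real_inner_self_eq_norm_sq] at h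
  rw [h]
  congr 1; ext x; simp [sq, RCLike.inner_apply, conj_trivial]

set_option maxHeartbeats 1000000 in
theorem strictly_concave_on_N
    {Ω : Type*} [MeasurableSpace Ω] (μ : Measure Ω)
    {H : Type*} [NormedAddCommGroup H] [InnerProductSpace ℝ H] [CompleteSpace H]
    (ι : H →ₗ[ℝ] Lp ℝ 2 μ) (hι : Function.Injective ι)
    (C : ℝ) (hC : 0 < C) (hιC : ∀ u : H, ‖ι u‖ ≤ C * ‖u‖)
    (I : H → ℝ → ℝ → ℝ)
    (hI : ∀ u a b, I u a b = ‖u‖ ^ 2 / 2 -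
      (∫ x, (b * (Lp.posPart (ι u)) x ^ 2 + a * (Lp.negPart (ι u)) x ^ 2) ∂μ) / 2)
    (N : Submodule ℝ H) (lam : ℝ) (hlam : 0 < lam)
    (hN : ∀ v ∈ N, ‖v‖ ^ 2 ≤ lam * ‖ι v‖ ^ 2)
    (a b : ℝ) (ha : lam < a) (hb : lam < b) :
    ∀ w : H, ∀ v₁ ∈ N, ∀ v₂ ∈ N, v₁ ≠ v₂ → ∀ t : ℝ, 0 < t → t < 1 →
      (1 - t) * I (v₁ + w) a b + t * I (v₂ + w) a b <
        I ((1 - t) • v₁ + t • v₂ + w) a b := by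
  intro w v₁ hv₁ v₂ hv₂ hne t ht0 ht1
  set m : ℝ := min a b with hm_def
  have hm : lam < m := lt_min ha hb
  set u₁ : H := v₁ + w with hu₁
  set u₂ : H := v₂ + w with hu₂
  set u₃ : H := (1 - t) • v₁ + t • v₂ + w with hu₃def
  have hu₃ : u₃ = (1 - t) • u₁ + t • u₂ := by
    rw [hu₃def, hu₁, hu₂]; module
  -- norm identity in H
  have hnorm : ‖u₃‖^2 = (1-t)*‖u₁‖^2 + t*‖u₂‖^2 - t*(1-t)*‖u₁ - u₂‖^2 := by
    rw [hu₃]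
    have e : ∀ z : H, ‖z‖^2 = ⟪z, z⟫ := fun z => (real_inner_self_eq_norm_sq z).symm
    rw [e, e, e, e]
    simp only [inner_add_left, inner_add_right, inner_sub_left, inner_sub_right,
      real_inner_smul_left, real_inner_smul_right, real_inner_comm u₂ u₁]
    ring
  set f₁ : Lp ℝ 2 μ := ι u₁ with hf₁
  set f₂ : Lp ℝ 2 μ := ι u₂ with hf₂
  set f₃ : Lp ℝ 2 μ := (1-t) • f₁ + t • f₂ with hf₃
  have hιu₃ : ι u₃ = f₃ := by rw [hu₃, map_add, ι.map_smul, ι.map_smul]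
  -- integrability
  have intG : ∀ f : Lp ℝ 2 μ,
      Integrable (fun x => b * (Lp.posPart f) x ^ 2 + a * (Lp.negPart f) x ^ 2) μ := by
    intro f
    exact ((sq_integrable' (Lp.posPart f)).const_mul b).add
      ((sq_integrable' (Lp.negPart f)).const_mul a)
  have intD : Integrable (fun x => (f₁ x - f₂ x)^2) μ := by
    refine (sq_integrable' (f₁ - f₂)).congr ?_
    filter_upwards [Lp.coeFn_sub f₁ f₂] with x hx
    rw [hx]; rfl
  -- coeFn of f₃
  have h3 : ∀ᵐ x ∂μ, f₃ x = (1-t) * f₁ x + t * f₂ x := by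
    filter_upwards [Lp.coeFn_add ((1-t) • f₁) (t • f₂), Lp.coeFn_smul (1-t) f₁,
      Lp.coeFn_smul t f₂] with x hx1 hx2 hx3
    rw [hf₃, hx1]
    simp only [Pi.add_apply]
    rw [hx2, hx3]
    simp [smul_eq_mul]
  -- the ae pointwise inequality
  have hae : ∀ᵐ x ∂μ, 0 ≤
      ((1-t) * (b * (Lp.posPart f₁) x ^ 2 + a * (Lp.negPart f₁) x ^ 2)
      + t * (b * (Lp.posPart f₂) x ^ 2 + a * (Lp.negPart f₂) x ^ 2)
      - (b * (Lp.posPart f₃) x ^ 2 + a * (Lp.negPart f₃) x ^ 2))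
      - m * (t*(1-t)) * (f₁ x - f₂ x)^2 := by
    filter_upwards [Lp.coeFn_posPart f₁, Lp.coeFn_negPart_eq_max f₁,
      Lp.coeFn_posPart f₂, Lp.coeFn_negPart_eq_max f₂,
      Lp.coeFn_posPart f₃, Lp.coeFn_negPart_eq_max f₃, h3] with x p1 n1 p2 n2 p3 n3 hx3
    rw [p1, n1, p2, n2, p3, n3, hx3]
    have := pw_ineq b a m t (f₁ x) (f₂ x) (min_le_right a b) (min_le_left a b)
      ht0.le ht1.le
    linarith
  -- integrate
  have int1 : Integrable (fun x =>
      (1-t) * (b * (Lp.posPart f₁) x ^ 2 + a * (Lp.negPart f₁) x ^ 2)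
      + t * (b * (Lp.posPart f₂) x ^ 2 + a * (Lp.negPart f₂) x ^ 2)
      - (b * (Lp.posPart f₃) x ^ 2 + a * (Lp.negPart f₃) x ^ 2)) μ :=
    (((intG f₁).const_mul (1-t)).add ((intG f₂).const_mul t)).sub (intG f₃)
  have int2 : Integrable (fun x => m * (t*(1-t)) * (f₁ x - f₂ x)^2) μ :=
    intD.const_mul _
  have int3 : Integrable (fun x =>
      (1-t) * (b * (Lp.posPart f₁) x ^ 2 + a * (Lp.negPart f₁) x ^ 2)
      + t * (b * (Lp.posPart f₂) x ^ 2 + a * (Lp.negPart f₂) x ^ 2)) μ :=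
    ((intG f₁).const_mul (1-t)).add ((intG f₂).const_mul t)
  have hint0 : (0:ℝ) ≤ ∫ x, (((1-t) * (b * (Lp.posPart f₁) x ^ 2 + a * (Lp.negPart f₁) x ^ 2)
      + t * (b * (Lp.posPart f₂) x ^ 2 + a * (Lp.negPart f₂) x ^ 2)
      - (b * (Lp.posPart f₃) x ^ 2 + a * (Lp.negPart f₃) x ^ 2))
      - m * (t*(1-t)) * (f₁ x - f₂ x)^2) ∂μ :=
    integral_nonneg_of_ae hae
  have e1 : ∫ x, (((1-t) * (b * (Lp.posPart f₁) x ^ 2 + a * (Lp.negPart f₁) x ^ 2)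
      + t * (b * (Lp.posPart f₂) x ^ 2 + a * (Lp.negPart f₂) x ^ 2)
      - (b * (Lp.posPart f₃) x ^ 2 + a * (Lp.negPart f₃) x ^ 2))
      - m * (t*(1-t)) * (f₁ x - f₂ x)^2) ∂μ
      = (∫ x, ((1-t) * (b * (Lp.posPart f₁) x ^ 2 + a * (Lp.negPart f₁) x ^ 2)
      + t * (b * (Lp.posPart f₂) x ^ 2 + a * (Lp.negPart f₂) x ^ 2)
      - (b * (Lp.posPart f₃) x ^ 2 + a * (Lp.negPart f₃) x ^ 2)) ∂μ)
      - ∫ x, (m * (t*(1-t)) * (f₁ x - f₂ x)^2) ∂μ :=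
    integral_sub int1 int2
  have e2 : ∫ x, ((1-t) * (b * (Lp.posPart f₁) x ^ 2 + a * (Lp.negPart f₁) x ^ 2)
      + t * (b * (Lp.posPart f₂) x ^ 2 + a * (Lp.negPart f₂) x ^ 2)
      - (b * (Lp.posPart f₃) x ^ 2 + a * (Lp.negPart f₃) x ^ 2)) ∂μ
      = (∫ x, ((1-t) * (b * (Lp.posPart f₁) x ^ 2 + a * (Lp.negPart f₁) x ^ 2)
      + t * (b * (Lp.posPart f₂) x ^ 2 + a * (Lp.negPart f₂) x ^ 2)) ∂μ)
      - ∫ x, (b * (Lp.posPart f₃) x ^ 2 + a * (Lp.negPart f₃) x ^ 2) ∂μ :=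
    integral_sub int3 (intG f₃)
  have e3 : ∫ x, ((1-t) * (b * (Lp.posPart f₁) x ^ 2 + a * (Lp.negPart f₁) x ^ 2)
      + t * (b * (Lp.posPart f₂) x ^ 2 + a * (Lp.negPart f₂) x ^ 2)) ∂μ
      = (∫ x, ((1-t) * (b * (Lp.posPart f₁) x ^ 2 + a * (Lp.negPart f₁) x ^ 2)) ∂μ)
      + ∫ x, (t * (b * (Lp.posPart f₂) x ^ 2 + a * (Lp.negPart f₂) x ^ 2)) ∂μ :=
    integral_add ((intG f₁).const_mul (1-t)) ((intG f₂).const_mul t)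
  have e4 : ∫ x, ((1-t) * (b * (Lp.posPart f₁) x ^ 2 + a * (Lp.negPart f₁) x ^ 2)) ∂μ
      = (1-t) * ∫ x, (b * (Lp.posPart f₁) x ^ 2 + a * (Lp.negPart f₁) x ^ 2) ∂μ :=
    integral_const_mul _ _
  have e5 : ∫ x, (t * (b * (Lp.posPart f₂) x ^ 2 + a * (Lp.negPart f₂) x ^ 2)) ∂μ
      = t * ∫ x, (b * (Lp.posPart f₂) x ^ 2 + a * (Lp.negPart f₂) x ^ 2) ∂μ :=
    integral_const_mul _ _
  have e6 : ∫ x, (m * (t*(1-t)) * (f₁ x - f₂ x)^2) ∂μ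
      = m * (t*(1-t)) * ∫ x, (f₁ x - f₂ x)^2 ∂μ :=
    integral_const_mul _ _
  -- identify ∫ (f₁ x - f₂ x)^2 with norm
  have hD : ∫ x, (f₁ x - f₂ x)^2 ∂μ = ‖f₁ - f₂‖^2 := by
    rw [norm_sq_eq_integral' (f₁ - f₂)]
    apply integral_congr_ae
    filter_upwards [Lp.coeFn_sub f₁ f₂] with x hx
    rw [hx]; rfl
  have key2 : m * (t*(1-t)) * ‖f₁ - f₂‖^2
      + (∫ x, (b * (Lp.posPart f₃) x ^ 2 + a * (Lp.negPart f₃) x ^ 2) ∂μ)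
      ≤ (1-t) * (∫ x, (b * (Lp.posPart f₁) x ^ 2 + a * (Lp.negPart f₁) x ^ 2) ∂μ)
        + t * (∫ x, (b * (Lp.posPart f₂) x ^ 2 + a * (Lp.negPart f₂) x ^ 2) ∂μ) := by
    rw [e1, e2, e3, e4, e5, e6, hD] at hint0
    linarith
  -- f₁ - f₂ = ι (v₁ - v₂)
  have huv : u₁ - u₂ = v₁ - v₂ := by rw [hu₁, hu₂]; abel
  have hfd : f₁ - f₂ = ι (v₁ - v₂) := by
    rw [← huv, map_sub, ← hf₁, ← hf₂]
  have hvne : v₁ - v₂ ≠ 0 := sub_ne_zero.mpr hne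
  have hιv : ι (v₁ - v₂) ≠ 0 := fun h => hvne (hι (by rw [h, map_zero]))
  have hL : 0 < ‖f₁ - f₂‖^2 := by rw [hfd]; exact pow_pos (norm_pos_iff.mpr hιv) 2
  have hNv : ‖u₁ - u₂‖^2 ≤ lam * ‖f₁ - f₂‖^2 := by
    rw [huv, hfd]; exact hN (v₁ - v₂) (sub_mem hv₁ hv₂)
  -- final assembly
  rw [hI, hI, hI, ← hf₁, ← hf₂, hιu₃]
  have ht01 : 0 < t * (1 - t) := mul_pos ht0 (by linarith)
  have hmul : t * (1-t) * ‖u₁ - u₂‖^2 ≤ t * (1-t) * (lam * ‖f₁ - f₂‖^2) :=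
    mul_le_mul_of_nonneg_left hNv ht01.le
  have hkey : 0 < t * (1-t) * ((m - lam) * ‖f₁ - f₂‖^2) :=
    mul_pos ht01 (mul_pos (by linarith) hL)
  nlinarith [key2, hnorm, hmul, hkey]
end

section
/- Let M ⊆ H be a linear subspace and Λ > 0 a real number with ‖w‖² ≥ Λ ‖w‖_{L²}² for all w ∈ M, and let a < Λ and b < Λ. Then for every v ∈ H the function w ↦ I(v + w, a, b) is strictly convex on M: for all w₁, w₂ ∈ M with w₁ ≠ w₂ and all t ∈ (0, 1), I(v + (1 − t) w₁ + t w₂, a, b) < (1 − t) I(v + w₁, a, b) + t I(v + w₂, a, b). -/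
open MeasureTheory RealInnerProductSpace

private lemma norm_combo_sq {E : Type*} [NormedAddCommGroup E] [InnerProductSpace ℝ E]
    (t : ℝ) (x y : E) :
    ‖(1-t)•x + t•y‖^2 = (1-t)*‖x‖^2 + t*‖y‖^2 - t*(1-t)*‖x-y‖^2 := by
  have h : ∀ z : E, ‖z‖^2 = ⟪z,z⟫ := fun z => (real_inner_self_eq_norm_sq z).symm
  rw [h, h, h, h]
  simp only [inner_add_add_self, inner_sub_sub_self, inner_smul_left, inner_smul_right,
    RCLike.conj_to_real, real_inner_comm x y]
  ring

private lemma posPart_sq_convex (t s₁ s₂ : ℝ) (ht0 : 0 ≤ t) (ht1 : t ≤ 1) :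
    max ((1-t)*s₁ + t*s₂) 0 ^ 2 ≤ (1-t) * max s₁ 0 ^ 2 + t * max s₂ 0 ^ 2 := by
  have h1 : 0 ≤ max s₁ 0 := le_max_right _ _
  have h2 : 0 ≤ max s₂ 0 := le_max_right _ _
  have h1' : s₁ ≤ max s₁ 0 := le_max_left _ _
  have h2' : s₂ ≤ max s₂ 0 := le_max_left _ _
  have hle : max ((1-t)*s₁ + t*s₂) 0 ≤ (1-t) * max s₁ 0 + t * max s₂ 0 := by
    apply max_le
    · nlinarith
    · nlinarith
  have hnn : 0 ≤ max ((1-t)*s₁ + t*s₂) 0 := le_max_right _ _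
  have hsq : max ((1-t)*s₁ + t*s₂) 0 ^ 2 ≤ ((1-t) * max s₁ 0 + t * max s₂ 0) ^ 2 := by
    nlinarith
  nlinarith [sq_nonneg (max s₁ 0 - max s₂ 0), mul_nonneg ht0 (by linarith : (0:ℝ) ≤ 1 - t)]

private lemma sq_split (s : ℝ) : max s 0 ^ 2 + max (-s) 0 ^ 2 = s ^ 2 := by
  rcases le_total 0 s with h | h
  · rw [max_eq_left h, max_eq_right (by linarith)]; ring
  · rw [max_eq_right h, max_eq_left (by linarith)]; ring

private lemma pointwise_ineq (a b t s₁ s₂ : ℝ) (ht0 : 0 ≤ t) (ht1 : t ≤ 1) :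
    (1-t) * (b * max s₁ 0 ^ 2 + a * max (-s₁) 0 ^ 2)
      + t * (b * max s₂ 0 ^ 2 + a * max (-s₂) 0 ^ 2)
    ≤ (b * max ((1-t)*s₁ + t*s₂) 0 ^ 2 + a * max (-((1-t)*s₁ + t*s₂)) 0 ^ 2)
      + (max a b * (t*(1-t))) * (s₁ - s₂) ^ 2 := by
  set c := max a b with hc
  have hcb : b ≤ c := le_max_right _ _
  have hca : a ≤ c := le_max_left _ _
  have h1 := posPart_sq_convex t s₁ s₂ ht0 ht1
  have h2 := posPart_sq_convex t (-s₁) (-s₂) ht0 ht1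
  rw [show (1-t)*(-s₁) + t*(-s₂) = -((1-t)*s₁ + t*s₂) by ring] at h2
  have h1' := mul_le_mul_of_nonneg_left h1 (by linarith : (0:ℝ) ≤ c - b)
  have h2' := mul_le_mul_of_nonneg_left h2 (by linarith : (0:ℝ) ≤ c - a)
  have e1 := sq_split s₁
  have e2 := sq_split s₂
  have e3 := sq_split ((1-t)*s₁ + t*s₂)
  have ce1 : c * (max s₁ 0 ^ 2 + max (-s₁) 0 ^ 2) = c * s₁ ^ 2 := by rw [e1]
  have ce2 : c * (max s₂ 0 ^ 2 + max (-s₂) 0 ^ 2) = c * s₂ ^ 2 := by rw [e2]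
  have ce3 : c * (max ((1-t)*s₁ + t*s₂) 0 ^ 2 + max (-((1-t)*s₁ + t*s₂)) 0 ^ 2)
      = c * ((1-t)*s₁ + t*s₂) ^ 2 := by rw [e3]
  have hring : c * ((1-t)*s₁^2 + t*s₂^2)
      = c * ((1-t)*s₁ + t*s₂)^2 + c * (t*(1-t)*(s₁-s₂)^2) := by ring
  nlinarith [h1', h2', ce1, ce2, ce3, hring]

set_option maxHeartbeats 1000000 in
theorem strictly_convex_on_M
    {Ω : Type*} [MeasurableSpace Ω] (μ : Measure Ω)
    {H : Type*} [NormedAddCommGroup H] [InnerProductSpace ℝ H] [CompleteSpace H]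
    (ι : H →ₗ[ℝ] Lp ℝ 2 μ) (hι : Function.Injective ι)
    (C : ℝ) (hC : 0 < C) (hιC : ∀ u : H, ‖ι u‖ ≤ C * ‖u‖)
    (I : H → ℝ → ℝ → ℝ)
    (hI : ∀ u a b, I u a b = ‖u‖ ^ 2 / 2 -
      (∫ x, (b * (Lp.posPart (ι u)) x ^ 2 + a * (Lp.negPart (ι u)) x ^ 2) ∂μ) / 2)
    (M : Submodule ℝ H) (Lam : ℝ) (hLam : 0 < Lam)
    (hM : ∀ w ∈ M, Lam * ‖ι w‖ ^ 2 ≤ ‖w‖ ^ 2)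
    (a b : ℝ) (ha : a < Lam) (hb : b < Lam) :
    ∀ v : H, ∀ w₁ ∈ M, ∀ w₂ ∈ M, w₁ ≠ w₂ → ∀ t : ℝ, 0 < t → t < 1 →
      I (v + ((1 - t) • w₁ + t • w₂)) a b <
        (1 - t) * I (v + w₁) a b + t * I (v + w₂) a b := by
  intro v w₁ hw₁ w₂ hw₂ hne t ht0 ht1
  set c := max a b with hc
  set u₁ := v + w₁ with hu₁
  set u₂ := v + w₂ with hu₂
  set f₁ := ι u₁ with hf₁
  set f₂ := ι u₂ with hf₂
  -- the interpolation point
  have hut : v + ((1 - t) • w₁ + t • w₂) = (1 - t) • u₁ + t • u₂ := by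
    rw [hu₁, hu₂, smul_add, smul_add]
    have hv : (1 - t) • v + t • v = v := by
      rw [← add_smul]; norm_num
    rw [show (1-t) • v + (1-t) • w₁ + ((t • v) + t • w₂)
        = ((1-t) • v + t • v) + ((1-t) • w₁ + t • w₂) by abel, hv]
  have hmap : ι ((1 - t) • u₁ + t • u₂) = (1 - t) • f₁ + t • f₂ := by
    rw [map_add, LinearMap.map_smul, LinearMap.map_smul]
  -- pointwise integrand
  set gg : ℝ → ℝ := fun s => b * max s 0 ^ 2 + a * max (-s) 0 ^ 2 with hgg
  have hGae : ∀ f : Lp ℝ 2 μ,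
      (fun x => b * (Lp.posPart f) x ^ 2 + a * (Lp.negPart f) x ^ 2)
        =ᵐ[μ] fun x => gg (f x) := by
    intro f
    filter_upwards [Lp.coeFn_posPart f, Lp.coeFn_negPart_eq_max f] with x h1 h2
    rw [hgg]; simp only [h1, h2]
  have hint : ∀ f : Lp ℝ 2 μ,
      Integrable (fun x => b * (Lp.posPart f) x ^ 2 + a * (Lp.negPart f) x ^ 2) μ := by
    intro f
    exact (((Lp.memLp (Lp.posPart f)).integrable_sq).const_mul b).add
      (((Lp.memLp (Lp.negPart f)).integrable_sq).const_mul a)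
  have hGint : ∀ f : Lp ℝ 2 μ, Integrable (fun x => gg (f x)) μ :=
    fun f => (hint f).congr (hGae f)
  have hF : ∀ u : H,
      (∫ x, (b * (Lp.posPart (ι u)) x ^ 2 + a * (Lp.negPart (ι u)) x ^ 2) ∂μ)
        = ∫ x, gg ((ι u) x) ∂μ := fun u => integral_congr_ae (hGae (ι u))
  -- coefficient facts
  have ht1' : (0:ℝ) ≤ 1 - t := by linarith
  have htt : 0 < t * (1 - t) := mul_pos ht0 (by linarith)
  -- integrability of the squared difference
  have hsub : ⇑(f₁ - f₂) =ᵐ[μ] fun x => f₁ x - f₂ x := Lp.coeFn_sub f₁ f₂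
  have hsq : Integrable (fun x => (f₁ x - f₂ x) ^ 2) μ := by
    refine ((Lp.memLp (f₁ - f₂)).integrable_sq).congr ?_
    filter_upwards [hsub] with x hx
    rw [hx]
  have hnorm : ∫ x, (f₁ x - f₂ x) ^ 2 ∂μ = ‖f₁ - f₂‖ ^ 2 := by
    rw [← real_inner_self_eq_norm_sq, L2.inner_def]
    apply integral_congr_ae
    filter_upwards [hsub] with x hx
    rw [RCLike.inner_apply, conj_trivial, hx]
    ring
  -- a.e. pointwise convexity inequality
  have hptae : ∀ᵐ x ∂μ,
      (1 - t) * gg (f₁ x) + t * gg (f₂ x)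
        ≤ gg (((1 - t) • f₁ + t • f₂) x) + (c * (t * (1 - t))) * (f₁ x - f₂ x) ^ 2 := by
    filter_upwards [Lp.coeFn_add ((1-t) • f₁) (t • f₂), Lp.coeFn_smul (1-t) f₁,
      Lp.coeFn_smul t f₂] with x hx1 hx2 hx3
    have hx : ((1 - t) • f₁ + t • f₂) x = (1 - t) * f₁ x + t * f₂ x := by
      rw [hx1, Pi.add_apply, hx2, hx3, Pi.smul_apply, Pi.smul_apply, smul_eq_mul, smul_eq_mul]
    rw [hx]
    exact pointwise_ineq a b t (f₁ x) (f₂ x) (le_of_lt ht0) (le_of_lt ht1)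
  -- integrate the pointwise inequality
  have key : (1 - t) * (∫ x, gg (f₁ x) ∂μ) + t * (∫ x, gg (f₂ x) ∂μ)
      ≤ (∫ x, gg (((1 - t) • f₁ + t • f₂) x) ∂μ) + (c * (t * (1 - t))) * ‖f₁ - f₂‖ ^ 2 := by
    have hL : Integrable (fun x => (1 - t) * gg (f₁ x) + t * gg (f₂ x)) μ :=
      ((hGint f₁).const_mul _).add ((hGint f₂).const_mul _)
    have hR : Integrable
        (fun x => gg (((1 - t) • f₁ + t • f₂) x) + (c * (t * (1 - t))) * (f₁ x - f₂ x) ^ 2) μ :=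
      (hGint _).add (hsq.const_mul _)
    have := integral_mono_ae hL hR hptae
    rw [integral_add ((hGint f₁).const_mul _) ((hGint f₂).const_mul _),
      integral_add (hGint _) (hsq.const_mul _), integral_const_mul, integral_const_mul,
      integral_const_mul, hnorm] at this
    exact this
  -- quadratic identity for norms
  have hn1 : ‖(1 - t) • u₁ + t • u₂‖ ^ 2
      = (1 - t) * ‖u₁‖ ^ 2 + t * ‖u₂‖ ^ 2 - t * (1 - t) * ‖u₁ - u₂‖ ^ 2 :=
    norm_combo_sq t u₁ u₂
  have hdiff : u₁ - u₂ = w₁ - w₂ := by rw [hu₁, hu₂]; abel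
  have hfdiff : f₁ - f₂ = ι (w₁ - w₂) := by rw [hf₁, hf₂, ← map_sub, hdiff]
  -- positivity of the correction
  have hwm : w₁ - w₂ ∈ M := sub_mem hw₁ hw₂
  have hMw := hM _ hwm
  have hw0 : w₁ - w₂ ≠ 0 := sub_ne_zero.2 hne
  have hwpos : 0 < ‖w₁ - w₂‖ ^ 2 := pow_pos (norm_pos_iff.mpr hw0) 2
  have hcL : c < Lam := max_lt ha hb
  have hpos : c * ‖ι (w₁ - w₂)‖ ^ 2 < ‖w₁ - w₂‖ ^ 2 := by
    rcases eq_or_lt_of_le (sq_nonneg ‖ι (w₁ - w₂)‖) with hX | hX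
    · rw [← hX]; simpa using hwpos
    · nlinarith
  have hprod : 0 < (t * (1 - t)) * (‖w₁ - w₂‖ ^ 2 - c * ‖ι (w₁ - w₂)‖ ^ 2) :=
    mul_pos htt (by linarith)
  -- assemble
  simp only [hI, hF]
  rw [hut, hmap, hn1, hdiff]
  rw [hfdiff] at key
  nlinarith [key, hprod]
end

section
/- For every (a, b) ∈ Q_k and every w ∈ M_{k−1} there exists a unique v = θ(w, a, b) ∈ N_{k−1} such that I(θ(w,a,b) + w, a, b) = sup_{v' ∈ N_{k−1}} I(v' + w, a, b). Moreover: (1) for v ∈ N_{k−1}, v = θ(w, a, b) if and only if ⟨v + w, z⟩ = ∫_Ω ( b (v+w)⁺ − a (v+w)⁻ ) z dμ for all z ∈ N_{k−1}; (2) θ is positively homogeneous: θ(t w, a, b) = t θ(w, a, b) for all t ≥ 0; (3) the map (w, a, b) ↦ θ(w, a, b) is continuous on M_{k−1} × Q_k; (4) θ(w, λ_k, λ_k) = 0 for all w ∈ M_{k−1}. -/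
open MeasureTheory RealInnerProductSpace

section PtwiseAux

lemma ptwise_lower (a b s r : ℝ) :
    b * max s 0 ^ 2 + a * max (-s) 0 ^ 2 + 2 * (b * max s 0 - a * max (-s) 0) * r
      + min a b * r ^ 2 ≤ b * max (s + r) 0 ^ 2 + a * max (-(s + r)) 0 ^ 2 := by
  have hmin1 : min a b ≤ a := min_le_left _ _
  have hmin2 : min a b ≤ b := min_le_right _ _
  rcases le_total 0 s with hs | hs <;> rcases le_total 0 (s + r) with hsr | hsr
  · rw [max_eq_left hs, max_eq_right (neg_nonpos.2 hs), max_eq_left hsr,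
      max_eq_right (neg_nonpos.2 hsr)]
    nlinarith [sq_nonneg r]
  · rw [max_eq_left hs, max_eq_right (neg_nonpos.2 hs), max_eq_right hsr,
      max_eq_left (neg_nonneg.2 hsr)]
    nlinarith [mul_nonneg (mul_nonneg (sub_nonneg.2 hmin2) hs)
      (neg_nonneg.2 (by linarith : s + 2*r ≤ 0)), sq_nonneg (s + r), sq_nonneg r]
  · rw [max_eq_right hs, max_eq_left (neg_nonneg.2 hs), max_eq_left hsr,
      max_eq_right (neg_nonpos.2 hsr)]
    nlinarith [mul_nonneg (mul_nonneg (sub_nonneg.2 hmin1) (neg_nonneg.2 hs))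
      (by linarith : 0 ≤ s + 2*r), sq_nonneg (s + r), sq_nonneg r]
  · rw [max_eq_right hs, max_eq_left (neg_nonneg.2 hs), max_eq_right hsr,
      max_eq_left (neg_nonneg.2 hsr)]
    nlinarith [sq_nonneg r]

lemma ptwise_upper (a b s r : ℝ) :
    b * max (s + r) 0 ^ 2 + a * max (-(s + r)) 0 ^ 2 ≤
      b * max s 0 ^ 2 + a * max (-s) 0 ^ 2 + 2 * (b * max s 0 - a * max (-s) 0) * r
      + max a b * r ^ 2 := by
  have hmax1 : a ≤ max a b := le_max_left _ _
  have hmax2 : b ≤ max a b := le_max_right _ _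
  rcases le_total 0 s with hs | hs <;> rcases le_total 0 (s + r) with hsr | hsr
  · rw [max_eq_left hs, max_eq_right (neg_nonpos.2 hs), max_eq_left hsr,
      max_eq_right (neg_nonpos.2 hsr)]
    nlinarith [sq_nonneg r]
  · rw [max_eq_left hs, max_eq_right (neg_nonpos.2 hs), max_eq_right hsr,
      max_eq_left (neg_nonneg.2 hsr)]
    nlinarith [mul_nonneg (mul_nonneg (sub_nonneg.2 hmax2) hs)
      (neg_nonneg.2 (by linarith : s + 2*r ≤ 0)),
      mul_nonneg (sub_nonneg.2 hmax1) (sq_nonneg (s+r)), sq_nonneg r]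
  · rw [max_eq_right hs, max_eq_left (neg_nonneg.2 hs), max_eq_left hsr,
      max_eq_right (neg_nonpos.2 hsr)]
    nlinarith [mul_nonneg (mul_nonneg (sub_nonneg.2 hmax1) (neg_nonneg.2 hs))
      (by linarith : 0 ≤ s + 2*r), mul_nonneg (sub_nonneg.2 hmax2) (sq_nonneg (s+r)),
      sq_nonneg r]
  · rw [max_eq_right hs, max_eq_left (neg_nonneg.2 hs), max_eq_right hsr,
      max_eq_left (neg_nonneg.2 hsr)]
    nlinarith [sq_nonneg r]

end PtwiseAux

section LpAux

variable {α : Type*} [MeasurableSpace α] {μ : Measure α}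

lemma my_inner (f g : Lp ℝ 2 μ) : ⟪f, g⟫ = ∫ x, f x * g x ∂μ := by
  rw [L2.inner_def]; simp [RCLike.inner_apply]
  exact integral_congr_ae (ae_of_all _ fun x => mul_comm _ _)

lemma my_int (f g : Lp ℝ 2 μ) : Integrable (fun x => f x * g x) μ := by
  have := L2.integrable_inner (𝕜 := ℝ) g f
  simpa [RCLike.inner_apply] using this

noncomputable def Gv (a b : ℝ) (f : Lp ℝ 2 μ) : ℝ :=
  b * ‖Lp.posPart f‖ ^ 2 + a * ‖Lp.negPart f‖ ^ 2

noncomputable def Tv (a b : ℝ) (f : Lp ℝ 2 μ) : Lp ℝ 2 μ :=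
  b • Lp.posPart f - a • Lp.negPart f

lemma integrable_comb (a b : ℝ) (f : Lp ℝ 2 μ) :
    Integrable (fun x => b * (Lp.posPart f) x ^ 2 + a * (Lp.negPart f) x ^ 2) μ := by
  apply Integrable.add
  · simpa [pow_two] using (my_int (Lp.posPart f) (Lp.posPart f)).const_mul b
  · simpa [pow_two] using (my_int (Lp.negPart f) (Lp.negPart f)).const_mul a

lemma Gv_integral (a b : ℝ) (f : Lp ℝ 2 μ) :
    ∫ x, (b * (Lp.posPart f) x ^ 2 + a * (Lp.negPart f) x ^ 2) ∂μ = Gv a b f := by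
  rw [integral_add ((my_int (Lp.posPart f) (Lp.posPart f)).const_mul b |>.congr
        (by filter_upwards with x using by ring))
      ((my_int (Lp.negPart f) (Lp.negPart f)).const_mul a |>.congr
        (by filter_upwards with x using by ring))]
  have h1 : ∫ x, b * (Lp.posPart f) x ^ 2 ∂μ = b * ‖Lp.posPart f‖ ^ 2 := by
    rw [← real_inner_self_eq_norm_sq, my_inner, ← integral_const_mul]
    congr 1; ext x; ring
  have h2 : ∫ x, a * (Lp.negPart f) x ^ 2 ∂μ = a * ‖Lp.negPart f‖ ^ 2 := by
    rw [← real_inner_self_eq_norm_sq, my_inner, ← integral_const_mul]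
    congr 1; ext x; ring
  rw [h1, h2, Gv]

lemma Tv_coeFn (a b : ℝ) (f : Lp ℝ 2 μ) :
    ⇑(Tv a b f) =ᵐ[μ] fun x => b * (Lp.posPart f) x - a * (Lp.negPart f) x := by
  filter_upwards [Lp.coeFn_sub (b • Lp.posPart f) (a • Lp.negPart f),
    Lp.coeFn_smul b (Lp.posPart f), Lp.coeFn_smul a (Lp.negPart f)] with x h1 h2 h3
  simp only [Tv, h1, Pi.sub_apply, h2, h3, Pi.smul_apply, smul_eq_mul]

lemma Tv_integral (a b : ℝ) (f g : Lp ℝ 2 μ) :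
    ∫ x, (b * (Lp.posPart f) x - a * (Lp.negPart f) x) * g x ∂μ = ⟪Tv a b f, g⟫ := by
  rw [my_inner]
  refine integral_congr_ae ?_
  filter_upwards [Tv_coeFn a b f] with x h
  rw [h]

lemma norm_sq_int (h : Lp ℝ 2 μ) : ‖h‖ ^ 2 = ∫ x, h x * h x ∂μ := by
  rw [← real_inner_self_eq_norm_sq, my_inner]

lemma key_lower (a b : ℝ) (f h : Lp ℝ 2 μ) :
    Gv a b f + 2 * ⟪Tv a b f, h⟫ + min a b * ‖h‖ ^ 2 ≤ Gv a b (f + h) := by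
  rw [← Gv_integral a b f, ← Gv_integral a b (f + h), ← Tv_integral, norm_sq_int]
  have i1 := integrable_comb a b f (μ := μ)
  have i2 : Integrable
      (fun x => 2 * ((b * (Lp.posPart f) x - a * (Lp.negPart f) x) * h x)) μ := by
    refine ((my_int (Tv a b f) h).const_mul 2).congr ?_
    filter_upwards [Tv_coeFn a b f] with x hx
    rw [hx]
  have i3 : Integrable (fun x => min a b * (h x * h x)) μ := (my_int h h).const_mul _
  have i12 : Integrable (fun x => (b * (Lp.posPart f) x ^ 2 + a * (Lp.negPart f) x ^ 2)
      + 2 * ((b * (Lp.posPart f) x - a * (Lp.negPart f) x) * h x)) μ := i1.add i2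
  have i123 : Integrable (fun x => (b * (Lp.posPart f) x ^ 2 + a * (Lp.negPart f) x ^ 2)
      + 2 * ((b * (Lp.posPart f) x - a * (Lp.negPart f) x) * h x)
      + min a b * (h x * h x)) μ := i12.add i3
  rw [← integral_const_mul 2, ← integral_const_mul (min a b),
    ← integral_add i1 i2, ← integral_add i12 i3]
  refine integral_mono_ae i123 (integrable_comb a b (f + h)) ?_
  filter_upwards [Lp.coeFn_posPart f, Lp.coeFn_negPart_eq_max f,
    Lp.coeFn_posPart (f + h), Lp.coeFn_negPart_eq_max (f + h),
    Lp.coeFn_add f h] with x h1 h2 h3 h4 h5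
  rw [h1, h2, h3, h4, h5]
  simp only [Pi.add_apply]
  nlinarith [ptwise_lower a b (f x) (h x)]

lemma key_upper (a b : ℝ) (f h : Lp ℝ 2 μ) :
    Gv a b (f + h) ≤ Gv a b f + 2 * ⟪Tv a b f, h⟫ + max a b * ‖h‖ ^ 2 := by
  rw [← Gv_integral a b f, ← Gv_integral a b (f + h), ← Tv_integral, norm_sq_int]
  have i1 := integrable_comb a b f (μ := μ)
  have i2 : Integrable
      (fun x => 2 * ((b * (Lp.posPart f) x - a * (Lp.negPart f) x) * h x)) μ := by
    refine ((my_int (Tv a b f) h).const_mul 2).congr ?_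
    filter_upwards [Tv_coeFn a b f] with x hx
    rw [hx]
  have i3 : Integrable (fun x => max a b * (h x * h x)) μ := (my_int h h).const_mul _
  have i12 : Integrable (fun x => (b * (Lp.posPart f) x ^ 2 + a * (Lp.negPart f) x ^ 2)
      + 2 * ((b * (Lp.posPart f) x - a * (Lp.negPart f) x) * h x)) μ := i1.add i2
  have i123 : Integrable (fun x => (b * (Lp.posPart f) x ^ 2 + a * (Lp.negPart f) x ^ 2)
      + 2 * ((b * (Lp.posPart f) x - a * (Lp.negPart f) x) * h x)
      + max a b * (h x * h x)) μ := i12.add i3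
  rw [← integral_const_mul 2, ← integral_const_mul (max a b),
    ← integral_add i1 i2, ← integral_add i12 i3]
  refine integral_mono_ae (integrable_comb a b (f + h)) i123 ?_
  filter_upwards [Lp.coeFn_posPart f, Lp.coeFn_negPart_eq_max f,
    Lp.coeFn_posPart (f + h), Lp.coeFn_negPart_eq_max (f + h),
    Lp.coeFn_add f h] with x h1 h2 h3 h4 h5
  rw [h1, h2, h3, h4, h5]
  simp only [Pi.add_apply]
  nlinarith [ptwise_upper a b (f x) (h x)]

lemma posPart_smul (t : ℝ) (ht : 0 ≤ t) (f : Lp ℝ 2 μ) :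
    Lp.posPart (t • f) = t • Lp.posPart f := by
  apply Lp.ext
  filter_upwards [Lp.coeFn_posPart (t • f), Lp.coeFn_smul t f,
    Lp.coeFn_smul t (Lp.posPart f), Lp.coeFn_posPart f] with x h1 h2 h3 h4
  rw [h1, h2, h3]
  simp only [Pi.smul_apply, smul_eq_mul, h4]
  rw [mul_max_of_nonneg _ _ ht, mul_zero]

lemma negPart_smul (t : ℝ) (ht : 0 ≤ t) (f : Lp ℝ 2 μ) :
    Lp.negPart (t • f) = t • Lp.negPart f := by
  rw [Lp.negPart, Lp.negPart, ← smul_neg, posPart_smul t ht]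

lemma posPart_zero' : Lp.posPart (0 : Lp ℝ 2 μ) = 0 := by
  have := posPart_smul (μ := μ) 0 le_rfl 0
  simpa using this

lemma negPart_zero' : Lp.negPart (0 : Lp ℝ 2 μ) = 0 := by
  have := negPart_smul (μ := μ) 0 le_rfl 0
  simpa using this

lemma Tv_zero (a b : ℝ) : Tv a b (0 : Lp ℝ 2 μ) = 0 := by
  simp [Tv, posPart_zero', negPart_zero']

lemma Gv_zero (a b : ℝ) : Gv a b (0 : Lp ℝ 2 μ) = 0 := by
  simp [Gv, posPart_zero', negPart_zero']

lemma Gv_smul (a b t : ℝ) (ht : 0 ≤ t) (f : Lp ℝ 2 μ) :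
    Gv a b (t • f) = t ^ 2 * Gv a b f := by
  simp only [Gv, posPart_smul t ht, negPart_smul t ht, norm_smul]
  rw [Real.norm_eq_abs, abs_of_nonneg ht]
  ring

lemma Tv_diag (c : ℝ) (f : Lp ℝ 2 μ) : Tv c c f = c • f := by
  rw [Tv, ← smul_sub]
  congr 1
  apply Lp.ext
  filter_upwards [Lp.coeFn_sub (Lp.posPart f) (Lp.negPart f), Lp.coeFn_posPart f,
    Lp.coeFn_negPart_eq_max f] with x h1 h2 h3
  rw [h1]
  simp only [Pi.sub_apply, h2, h3]
  rcases le_total 0 (f x) with h | h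
  · rw [max_eq_left h, max_eq_right (by linarith)]; ring
  · rw [max_eq_right h, max_eq_left (by linarith)]; ring

lemma Gv_cont : Continuous (fun p : ℝ × ℝ × Lp ℝ 2 μ => Gv p.1 p.2.1 p.2.2) := by
  apply Continuous.add
  · exact (continuous_fst.comp continuous_snd).mul
      (((Lp.continuous_posPart.comp (continuous_snd.comp continuous_snd)).norm).pow 2)
  · exact continuous_fst.mul
      (((Lp.continuous_negPart.comp (continuous_snd.comp continuous_snd)).norm).pow 2)

lemma Gv_lb (a b : ℝ) (f : Lp ℝ 2 μ) : min a b * ‖f‖ ^ 2 ≤ Gv a b f := by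
  have := key_lower a b 0 f
  simpa [Gv_zero, Tv_zero] using this

lemma Gv_ub (a b : ℝ) (f : Lp ℝ 2 μ) : Gv a b f ≤ max a b * ‖f‖ ^ 2 := by
  have := key_upper a b 0 f
  simpa [Gv_zero, Tv_zero] using this

end LpAux

section Aux

lemma aux_zero {A B : ℝ} (h : ∀ t : ℝ, t * A + t ^ 2 * B ≤ 0) : A = 0 := by
  by_contra hA
  have hε : 0 < (1:ℝ) / (2 * (|B| + 1)) := by positivity
  set ε := (1:ℝ) / (2 * (|B| + 1)) with hεdef
  have hid : ε * (|B| + 1) = 1/2 := by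
    rw [hεdef]; field_simp
  have h3 := h (A * ε)
  have hA2 : 0 < A ^ 2 := by positivity
  have hBb : 0 ≤ 1/2 + ε * B := by nlinarith [neg_abs_le B, hε.le]
  nlinarith [mul_nonneg (mul_nonneg (sq_nonneg A) hε.le) hBb, mul_pos hA2 hε]

lemma exists_max_of_coercive {E : Type*} [NormedAddCommGroup E] [NormedSpace ℝ E]
    [FiniteDimensional ℝ E] (g : E → ℝ) (hg : Continuous g) (R : ℝ)
    (hcoer : ∀ v : E, R < ‖v‖ → g v < g 0) : ∃ v₀, ∀ v, g v ≤ g v₀ := by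
  have hpr : ProperSpace E := FiniteDimensional.proper ℝ E
  obtain ⟨v₀, hv₀mem, hmax⟩ := (isCompact_closedBall (0:E) (max R 0)).exists_isMaxOn
    ⟨0, by simp⟩ hg.continuousOn
  refine ⟨v₀, fun v => ?_⟩
  rcases le_or_gt ‖v‖ (max R 0) with h | h
  · exact hmax (by simpa [Metric.mem_closedBall, dist_zero_right] using h)
  · have h0 : g v < g 0 := hcoer v (lt_of_le_of_lt (le_max_left _ _) h)
    exact h0.le.trans (hmax (by simp [Metric.mem_closedBall]))

end Aux
set_option maxHeartbeats 4000000 in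
theorem exists_theta_reduction
    {Ω : Type*} [MeasurableSpace Ω] (μ : Measure Ω)
    {H : Type*} [NormedAddCommGroup H] [InnerProductSpace ℝ H] [CompleteSpace H]
    (ι : H →ₗ[ℝ] Lp ℝ 2 μ) (hι : Function.Injective ι)
    (C : ℝ) (hC : 0 < C) (hιC : ∀ u : H, ‖ι u‖ ≤ C * ‖u‖)
    (I : H → ℝ → ℝ → ℝ)
    (hI : ∀ u a b, I u a b = ‖u‖ ^ 2 / 2 -
      (∫ x, (b * (Lp.posPart (ι u)) x ^ 2 + a * (Lp.negPart (ι u)) x ^ 2) ∂μ) / 2)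
    (lam₀ lam₁ lam₂ : ℝ) (hlam₀ : 0 < lam₀) (hlam₀₁ : lam₀ < lam₁) (hlam₁₂ : lam₁ < lam₂)
    (N E M : Submodule ℝ H)
    (hNcl : IsClosed (N : Set H)) (hEcl : IsClosed (E : Set H)) (hMcl : IsClosed (M : Set H))
    (hNfd : FiniteDimensional ℝ N) (hEfd : FiniteDimensional ℝ E) (hEne : E ≠ ⊥)
    (horthNE : ∀ v ∈ N, ∀ y ∈ E, ⟪v, y⟫ = 0)
    (horthNM : ∀ v ∈ N, ∀ w ∈ M, ⟪v, w⟫ = 0)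
    (horthEM : ∀ y ∈ E, ∀ w ∈ M, ⟪y, w⟫ = 0)
    (horthNE2 : ∀ v ∈ N, ∀ y ∈ E, ∫ x, (ι v) x * (ι y) x ∂μ = 0)
    (horthNM2 : ∀ v ∈ N, ∀ w ∈ M, ∫ x, (ι v) x * (ι w) x ∂μ = 0)
    (horthEM2 : ∀ y ∈ E, ∀ w ∈ M, ∫ x, (ι y) x * (ι w) x ∂μ = 0)
    (hdirect : N ⊔ E ⊔ M = ⊤)
    (hNspec : ∀ v ∈ N, ‖v‖ ^ 2 ≤ lam₀ * ‖ι v‖ ^ 2)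
    (hEspec : ∀ y ∈ E, ∀ u : H, ⟪y, u⟫ = lam₁ * ∫ x, (ι y) x * (ι u) x ∂μ)
    (hMspec : ∀ w ∈ M, lam₂ * ‖ι w‖ ^ 2 ≤ ‖w‖ ^ 2)
    (hcompact : ∀ s : Set H, Bornology.IsBounded s →
      IsCompact (closure ((fun u => ι u) '' s)))
    :
    ∃ θ : ℝ → ℝ → H → H,
      (∀ a b, a ∈ Set.Ioo lam₀ lam₂ → b ∈ Set.Ioo lam₀ lam₂ → ∀ w ∈ E ⊔ M,
        θ a b w ∈ N ∧
        (∀ v ∈ N, I (v + w) a b ≤ I (θ a b w + w) a b) ∧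
        (∀ v ∈ N, (∀ v' ∈ N, I (v' + w) a b ≤ I (v + w) a b) → v = θ a b w) ∧
        (∀ v ∈ N, (v = θ a b w ↔ ∀ z ∈ N, ⟪v + w, z⟫ =
          ∫ x, (b * (Lp.posPart (ι (v + w))) x - a * (Lp.negPart (ι (v + w))) x) *
            (ι z) x ∂μ)) ∧
        (∀ t : ℝ, 0 ≤ t → θ a b (t • w) = t • θ a b w)) ∧
      ContinuousOn (fun q : H × ℝ × ℝ => θ q.2.1 q.2.2 q.1)
        (((E ⊔ M : Submodule ℝ H) : Set H) ×ˢ (Set.Ioo lam₀ lam₂ ×ˢ Set.Ioo lam₀ lam₂)) ∧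
      (∀ w ∈ E ⊔ M, θ lam₁ lam₁ w = 0) := by
  classical
  have hι_cont : Continuous ι := AddMonoidHomClass.continuous_of_bound ι C hιC
  have hIG : ∀ (u : H) (a b : ℝ), I u a b = ‖u‖^2/2 - Gv a b (ι u)/2 := by
    intro u a b; rw [hI, Gv_integral]
  have horth : ∀ w ∈ E ⊔ M, ∀ v ∈ N, ⟪v, w⟫ = 0 ∧ ⟪ι v, ι w⟫ = 0 := by
    intro w hw v hv
    obtain ⟨y, hy, m, hm, rfl⟩ := Submodule.mem_sup.1 hw
    constructor
    · rw [inner_add_right, horthNE v hv y hy, horthNM v hv m hm, add_zero]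
    · rw [map_add, inner_add_right, my_inner, my_inner, horthNE2 v hv y hy,
        horthNM2 v hv m hm, add_zero]
  -- strict maximality from the Euler-Lagrange equation
  have strictmax : ∀ a b : ℝ, lam₀ < min a b → ∀ (w v₀ : H), v₀ ∈ N →
      (∀ z ∈ N, ⟪v₀ + w, z⟫ = ⟪Tv a b (ι (v₀ + w)), ι z⟫) →
      ∀ v ∈ N, (min a b - lam₀) * ‖v - v₀‖^2 ≤
        2*lam₀*(I (v₀ + w) a b - I (v + w) a b) := by
    intro a b hab w v₀ hv₀ hEL v hv
    have hδ : v - v₀ ∈ N := N.sub_mem hv hv₀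
    have hvw : v + w = (v₀ + w) + (v - v₀) := by abel
    have hnorm : ‖v + w‖^2 = ‖v₀ + w‖^2 + 2*⟪v₀ + w, v - v₀⟫ + ‖v - v₀‖^2 := by
      rw [hvw, norm_add_sq_real]
    have hιvw : ι (v + w) = ι (v₀ + w) + ι (v - v₀) := by rw [← map_add, ← hvw]
    have hGv : Gv a b (ι (v₀ + w)) + 2 * ⟪Tv a b (ι (v₀ + w)), ι (v - v₀)⟫
        + min a b * ‖ι (v - v₀)‖ ^ 2 ≤ Gv a b (ι (v + w)) := by
      rw [hιvw]; exact key_lower a b _ _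
    have hELδ := hEL (v - v₀) hδ
    have hs := hNspec (v - v₀) hδ
    have hcpos : (0:ℝ) < min a b := lt_trans hlam₀ hab
    rw [hIG, hIG]
    nlinarith [mul_le_mul_of_nonneg_left hs hcpos.le,
      mul_le_mul_of_nonneg_left hGv hlam₀.le, sq_nonneg ‖ι (v - v₀)‖]
  have EL_to_max : ∀ a b : ℝ, lam₀ < min a b → ∀ (w v₀ : H), v₀ ∈ N →
      (∀ z ∈ N, ⟪v₀ + w, z⟫ = ⟪Tv a b (ι (v₀ + w)), ι z⟫) →
      ∀ v ∈ N, I (v + w) a b ≤ I (v₀ + w) a b := by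
    intro a b hab w v₀ hv₀ hEL v hv
    have h := strictmax a b hab w v₀ hv₀ hEL v hv
    nlinarith [mul_nonneg (sub_nonneg.2 hab.le) (sq_nonneg ‖v - v₀‖)]
  have max_to_EL : ∀ (a b : ℝ) (w v₀ : H), v₀ ∈ N →
      (∀ v ∈ N, I (v + w) a b ≤ I (v₀ + w) a b) →
      ∀ z ∈ N, ⟪v₀ + w, z⟫ = ⟪Tv a b (ι (v₀ + w)), ι z⟫ := by
    intro a b w v₀ hv₀ hmax z hz
    have key : ∀ t : ℝ, t * (⟪v₀ + w, z⟫ - ⟪Tv a b (ι (v₀ + w)), ι z⟫)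
        + t^2 * (‖z‖^2/2 - max a b * ‖ι z‖^2/2 - (⟪v₀ + w, z⟫ - ⟪Tv a b (ι (v₀ + w)), ι z⟫) * 0) ≤ 0 := by
      intro t
      have h1 : I ((v₀ + t • z) + w) a b ≤ I (v₀ + w) a b :=
        hmax _ (N.add_mem hv₀ (N.smul_mem t hz))
      have hvw : (v₀ + t • z) + w = (v₀ + w) + t • z := by abel
      have hnorm : ‖(v₀ + t • z) + w‖^2 = ‖v₀ + w‖^2 + 2*(t * ⟪v₀ + w, z⟫) + t^2*‖z‖^2 := by
        rw [hvw, norm_add_sq_real, real_inner_smul_right, norm_smul, mul_pow,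
          Real.norm_eq_abs, sq_abs]
      have hιvw : ι ((v₀ + t • z) + w) = ι (v₀ + w) + t • ι z := by
        rw [← ι.map_smul, ← map_add, ← hvw]
      have hGv : Gv a b (ι ((v₀ + t • z) + w)) ≤ Gv a b (ι (v₀ + w))
          + 2 * (t * ⟪Tv a b (ι (v₀ + w)), ι z⟫) + max a b * (t^2 * ‖ι z‖^2) := by
        rw [hιvw]
        have := key_upper a b (ι (v₀ + w)) (t • ι z)
        rw [real_inner_smul_right, norm_smul, mul_pow, Real.norm_eq_abs, sq_abs] at this
        linarith
      rw [hIG, hIG] at h1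
      nlinarith [h1, hnorm, hGv]
    have := aux_zero (A := ⟪v₀ + w, z⟫ - ⟪Tv a b (ι (v₀ + w)), ι z⟫)
      (B := ‖z‖^2/2 - max a b * ‖ι z‖^2/2 - (⟪v₀ + w, z⟫ - ⟪Tv a b (ι (v₀ + w)), ι z⟫) * 0)
      key
    linarith
  have uniq : ∀ a b : ℝ, lam₀ < min a b → ∀ (w v v' : H), v ∈ N → v' ∈ N →
      (∀ z ∈ N, I (z + w) a b ≤ I (v + w) a b) →
      (∀ z ∈ N, I (z + w) a b ≤ I (v' + w) a b) → v = v' := by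
    intro a b hab w v v' hv hv' hmax hmax'
    have hEL := max_to_EL a b w v' hv' hmax'
    have h := strictmax a b hab w v' hv' hEL v hv
    have h2 : I (v' + w) a b ≤ I (v + w) a b := hmax v' hv'
    have h3 : ‖v - v'‖^2 ≤ 0 := by nlinarith
    have h4 : ‖v - v'‖ = 0 := by nlinarith [sq_nonneg ‖v - v'‖, norm_nonneg (v - v')]
    exact sub_eq_zero.mp (norm_eq_zero.mp h4)
  -- existence of a maximizer
  -- quantitative upper bound for I on N (uses orthogonality)
  have L4a : ∀ a b : ℝ, lam₀ < min a b → ∀ w ∈ E ⊔ M, ∀ v ∈ N,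
      2*lam₀*(I (v + w) a b) ≤ (lam₀ - min a b)*‖v‖^2 + lam₀*‖w‖^2
        - lam₀ * (min a b) * ‖ι w‖^2 := by
    intro a b hab w hw v hv
    have hO := horth w hw v hv
    have hnorm : ‖v + w‖^2 = ‖v‖^2 + ‖w‖^2 := by rw [norm_add_sq_real, hO.1]; ring
    have hnorm2 : ‖ι (v + w)‖^2 = ‖ι v‖^2 + ‖ι w‖^2 := by
      rw [map_add, norm_add_sq_real, hO.2]; ring
    have hg : (min a b) * (‖ι v‖^2 + ‖ι w‖^2) ≤ Gv a b (ι (v + w)) := by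
      rw [← hnorm2]; exact Gv_lb a b (ι (v + w))
    have hs := hNspec v hv
    have hcpos : (0:ℝ) < min a b := lt_trans hlam₀ hab
    rw [hIG, hnorm]
    nlinarith [mul_le_mul_of_nonneg_left hs hcpos.le,
      mul_le_mul_of_nonneg_left hg hlam₀.le,
      mul_nonneg (mul_nonneg hlam₀.le hcpos.le) (sq_nonneg ‖ι w‖)]
  -- bound on the norm of any maximizer
  have mbound : ∀ a b : ℝ, lam₀ < min a b → a < lam₂ → b < lam₂ → ∀ w ∈ E ⊔ M,
      ∀ v₀ ∈ N, (I ((0:H) + w) a b ≤ I (v₀ + w) a b) →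
      (min a b - lam₀) * ‖v₀‖^2 ≤ lam₀ * lam₂ * C^2 * ‖w‖^2 := by
    intro a b hab ha2 hb2 w hw v₀ hv₀ h0
    have h4a := L4a a b hab w hw v₀ hv₀
    have hg := Gv_ub a b (ι ((0:H) + w))
    have h0w : (0:H) + w = w := zero_add w
    have hI0 : ‖w‖^2 - max a b * ‖ι w‖^2 ≤ 2 * (I ((0:H) + w) a b) := by
      rw [hIG]; rw [h0w] at hg ⊢; linarith
    have hcpos : (0:ℝ) < min a b := lt_trans hlam₀ hab
    have hmx : max a b < lam₂ := max_lt ha2 hb2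
    have hl2 : (0:ℝ) < lam₂ := lt_trans (lt_trans hlam₀ hlam₀₁) hlam₁₂
    have hiw : ‖ι w‖^2 ≤ C^2 * ‖w‖^2 := by
      have h := hιC w
      nlinarith [norm_nonneg (ι w), norm_nonneg w, hC.le]
    have step1 : (min a b - lam₀) * ‖v₀‖^2 ≤ lam₀ * (max a b - min a b) * ‖ι w‖^2 := by
      nlinarith [h4a, mul_le_mul_of_nonneg_left h0 hlam₀.le,
        mul_le_mul_of_nonneg_left hI0 hlam₀.le]
    have step2 : lam₀ * (max a b - min a b) * ‖ι w‖^2 ≤ lam₀*lam₂*C^2*‖w‖^2 := by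
      have hA : (0:ℝ) ≤ lam₀ * (lam₂ - (max a b - min a b)) * ‖ι w‖^2 :=
        mul_nonneg (mul_nonneg hlam₀.le (by linarith)) (sq_nonneg _)
      have hB : lam₀ * lam₂ * ‖ι w‖^2 ≤ lam₀ * lam₂ * (C^2 * ‖w‖^2) :=
        mul_le_mul_of_nonneg_left hiw (mul_nonneg hlam₀.le hl2.le)
      nlinarith [hA, hB]
    linarith
  have exmax : ∀ a b : ℝ, lam₀ < min a b → ∀ w ∈ E ⊔ M,
      ∃ v₀ ∈ N, ∀ v ∈ N, I (v + w) a b ≤ I (v₀ + w) a b := by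
    intro a b hab w hw
    haveI := hNfd
    have hcpos : (0:ℝ) < min a b := lt_trans hlam₀ hab
    have hcl : (0:ℝ) < min a b - lam₀ := by linarith
    set J0 := I ((0:H) + w) a b with hJ0
    set Rnum := lam₀*‖w‖^2 + 2*lam₀*|J0| + 1 with hRnum
    have hRnum_pos : 0 < Rnum := by positivity
    set R := Real.sqrt (Rnum/(min a b - lam₀)) with hR
    have hgc : Continuous (fun v : ↥N => I (↑v + w) a b) := by
      have h1 : Continuous (fun v : ↥N => ‖(↑v + w : H)‖^2/2 - Gv a b (ι (↑v + w))/2) := by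
        apply Continuous.sub
        · exact (((continuous_subtype_val.add continuous_const).norm).pow 2).div_const 2
        · exact ((Gv_cont.comp (continuous_const.prodMk (continuous_const.prodMk
            (hι_cont.comp (continuous_subtype_val.add continuous_const))))).div_const 2)
      exact h1.congr (fun v => (hIG _ a b).symm)
    have hcoer : ∀ v : ↥N, R < ‖v‖ → (fun v : ↥N => I (↑v + w) a b) v
        < (fun v : ↥N => I (↑v + w) a b) 0 := by
      intro v hvR
      simp only [Submodule.coe_zero]
      have hnv : ‖(v : H)‖ = ‖v‖ := rfl
      have hRsq : R^2 = Rnum/(min a b - lam₀) := Real.sq_sqrt (by positivity)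
      have hv2 : R^2 < ‖(v:H)‖^2 := by
        rw [hnv]
        exact pow_lt_pow_left₀ hvR (Real.sqrt_nonneg _) two_ne_zero
      have hkey : Rnum < (min a b - lam₀) * ‖(v:H)‖^2 := by
        rw [hRsq] at hv2
        rw [div_lt_iff₀ hcl] at hv2
        linarith [hv2]
      have h4a := L4a a b hab w hw (↑v) v.2
      have hJ0abs : -(2*lam₀*|J0|) ≤ 2*lam₀*J0 := by
        nlinarith [neg_abs_le J0, hlam₀.le]
      have hιw : (0:ℝ) ≤ lam₀ * (min a b) * ‖ι w‖^2 := by positivity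
      have : 2*lam₀*(I (↑v + w) a b) < 2*lam₀*J0 := by nlinarith
      nlinarith
    obtain ⟨v₀, hmax⟩ := exists_max_of_coercive (fun v : ↥N => I (↑v + w) a b) hgc R hcoer
    exact ⟨↑v₀, v₀.2, fun v hv => hmax ⟨v, hv⟩⟩
  -- the maximizer predicate and θ
  set P : ℝ → ℝ → H → H → Prop := fun a b w v =>
    v ∈ N ∧ ∀ v' ∈ N, I (v' + w) a b ≤ I (v + w) a b with hPdef
  set θ : ℝ → ℝ → H → H := fun a b w =>
    if h : ∃ v, P a b w v then h.choose else 0 with hθdef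
  have hθP : ∀ a b : ℝ, lam₀ < min a b → ∀ w ∈ E ⊔ M, P a b w (θ a b w) := by
    intro a b hab w hw
    obtain ⟨v₀, hv₀, hmax⟩ := exmax a b hab w hw
    have hex : ∃ v, P a b w v := ⟨v₀, hv₀, hmax⟩
    simp only [hθdef, dif_pos hex]
    exact hex.choose_spec
  have hθuniq : ∀ a b : ℝ, lam₀ < min a b → ∀ w ∈ E ⊔ M, ∀ v, P a b w v → v = θ a b w := by
    intro a b hab w hw v hPv
    have h := hθP a b hab w hw
    exact uniq a b hab w v (θ a b w) hPv.1 h.1 hPv.2 h.2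
  have hELiff : ∀ a b : ℝ, lam₀ < min a b → ∀ w ∈ E ⊔ M, ∀ v ∈ N,
      (v = θ a b w ↔ ∀ z ∈ N, ⟪v + w, z⟫ = ⟪Tv a b (ι (v + w)), ι z⟫) := by
    intro a b hab w hw v hv
    constructor
    · rintro rfl
      exact max_to_EL a b w _ (hθP a b hab w hw).1 (hθP a b hab w hw).2
    · intro hEL
      exact hθuniq a b hab w hw v ⟨hv, EL_to_max a b hab w v hv hEL⟩
  refine ⟨θ, ?_, ?_, ?_⟩
  · intro a b ha hb w hw
    have hab : lam₀ < min a b := lt_min ha.1 hb.1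
    have hP := hθP a b hab w hw
    refine ⟨hP.1, hP.2, ?_, ?_, ?_⟩
    · intro v hv hmax
      exact hθuniq a b hab w hw v ⟨hv, hmax⟩
    · intro v hv
      rw [hELiff a b hab w hw v hv]
      constructor
      · intro h z hz
        rw [Tv_integral]
        exact h z hz
      · intro h z hz
        rw [← Tv_integral]
        exact h z hz
    · intro t ht
      rcases eq_or_lt_of_le ht with rfl | htpos
      · simp only [zero_smul]
        have h0 : P a b 0 0 := by
          refine ⟨N.zero_mem, EL_to_max a b hab 0 0 N.zero_mem ?_⟩
          intro z hz
          simp [Tv_zero]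
        exact (hθuniq a b hab 0 ((E ⊔ M).zero_mem) 0 h0).symm
      · have hscale : ∀ u : H, I (t • u) a b = t^2 * I u a b := by
          intro u
          rw [hIG, hIG, ι.map_smul, Gv_smul a b t ht, norm_smul, mul_pow,
            Real.norm_eq_abs, sq_abs]
          ring
        have hPt : P a b (t • w) (t • θ a b w) := by
          refine ⟨N.smul_mem t hP.1, ?_⟩
          intro v' hv'
          have hv't : t⁻¹ • v' ∈ N := N.smul_mem _ hv'
          have h1 := hP.2 (t⁻¹ • v') hv't
          have e1 : v' + t • w = t • (t⁻¹ • v' + w) := by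
            rw [smul_add, smul_smul, mul_inv_cancel₀ (ne_of_gt htpos), one_smul]
          have e2 : t • θ a b w + t • w = t • (θ a b w + w) := by rw [smul_add]
          rw [e1, e2, hscale, hscale]
          exact mul_le_mul_of_nonneg_left h1 (sq_nonneg t)
        exact (hθuniq a b hab (t • w) ((E ⊔ M).smul_mem t hw) _ hPt).symm
  · -- continuity
    have hIcont : Continuous (fun p : H × (H × ℝ × ℝ) =>
        I (p.1 + p.2.1) p.2.2.1 p.2.2.2) := by
      have cadd : Continuous (fun p : H × (H × ℝ × ℝ) => p.1 + p.2.1) := by fun_prop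
      have ca : Continuous (fun p : H × (H × ℝ × ℝ) => p.2.2.1) := by fun_prop
      have cb : Continuous (fun p : H × (H × ℝ × ℝ) => p.2.2.2) := by fun_prop
      have h1 : Continuous (fun p : H × (H × ℝ × ℝ) =>
          ‖p.1 + p.2.1‖^2/2 - Gv p.2.2.1 p.2.2.2 (ι (p.1 + p.2.1))/2) :=
        ((cadd.norm.pow 2).div_const 2).sub
          ((Gv_cont.comp (ca.prodMk (cb.prodMk (hι_cont.comp cadd)))).div_const 2)
      exact h1.congr fun p => (hIG _ _ _).symm
    have hl2 : (0:ℝ) < lam₂ := lt_trans (lt_trans hlam₀ hlam₀₁) hlam₁₂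
    intro q₀ hq₀
    have hw₀ : q₀.1 ∈ E ⊔ M := hq₀.1
    have ha₀ : q₀.2.1 ∈ Set.Ioo lam₀ lam₂ := hq₀.2.1
    have hb₀ : q₀.2.2 ∈ Set.Ioo lam₀ lam₂ := hq₀.2.2
    have hab₀ : lam₀ < min q₀.2.1 q₀.2.2 := lt_min ha₀.1 hb₀.1
    set cs : ℝ := (min q₀.2.1 q₀.2.2 + lam₀)/2 with hcs
    have hcs1 : lam₀ < cs := by rw [hcs]; linarith
    have hcs2 : cs < min q₀.2.1 q₀.2.2 := by rw [hcs]; linarith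
    set B2 : ℝ := lam₀*lam₂*C^2*(‖q₀.1‖+1)^2/(cs - lam₀) with hB2
    set B : ℝ := Real.sqrt B2 with hB
    -- compact set in which the maximizers eventually live
    haveI := hNfd
    haveI : ProperSpace ↥N := FiniteDimensional.proper ℝ ↥N
    have hK : IsCompact ((N : Set H) ∩ Metric.closedBall (0:H) B) := by
      have h1 : IsCompact (Subtype.val '' (Metric.closedBall (0:↥N) B)) :=
        (isCompact_closedBall _ _).image continuous_subtype_val
      have h2 : (N : Set H) ∩ Metric.closedBall (0:H) B
          = Subtype.val '' (Metric.closedBall (0:↥N) B) := by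
        ext x
        constructor
        · rintro ⟨hxN, hxB⟩
          exact ⟨⟨x, hxN⟩, by simpa [Metric.mem_closedBall, dist_zero_right] using
            (by simpa [Metric.mem_closedBall, dist_zero_right] using hxB : ‖x‖ ≤ B), rfl⟩
        · rintro ⟨v, hv, rfl⟩
          exact ⟨v.2, by simpa [Metric.mem_closedBall, dist_zero_right] using
            (by simpa [Metric.mem_closedBall, dist_zero_right] using hv : ‖v‖ ≤ B)⟩
      rw [h2]; exact h1
    apply Filter.tendsto_of_subseq_tendsto
    intro ns hns
    rw [tendsto_nhdsWithin_iff] at hns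
    obtain ⟨hns1, hns2⟩ := hns
    have h_a : Filter.Tendsto (fun n => (ns n).2.1) Filter.atTop (nhds q₀.2.1) :=
      ((continuous_fst.comp continuous_snd).tendsto q₀).comp hns1
    have h_b : Filter.Tendsto (fun n => (ns n).2.2) Filter.atTop (nhds q₀.2.2) :=
      ((continuous_snd.comp continuous_snd).tendsto q₀).comp hns1
    have h_w : Filter.Tendsto (fun n => (ns n).1) Filter.atTop (nhds q₀.1) :=
      (continuous_fst.tendsto q₀).comp hns1
    have e2 : ∀ᶠ n in Filter.atTop, cs < min (ns n).2.1 (ns n).2.2 :=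
      (h_a.min h_b).eventually (eventually_gt_nhds hcs2)
    have e3 : ∀ᶠ n in Filter.atTop, ‖(ns n).1‖ < ‖q₀.1‖ + 1 :=
      h_w.norm.eventually (eventually_lt_nhds (lt_add_one _))
    -- the maximizers eventually lie in the compact set
    have hbnd : ∀ᶠ n in Filter.atTop,
        θ (ns n).2.1 (ns n).2.2 (ns n).1 ∈ (N : Set H) ∩ Metric.closedBall (0:H) B := by
      filter_upwards [hns2, e2, e3] with n hS hmin hnrm
      have hwn : (ns n).1 ∈ E ⊔ M := hS.1
      have han : (ns n).2.1 ∈ Set.Ioo lam₀ lam₂ := hS.2.1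
      have hbn : (ns n).2.2 ∈ Set.Ioo lam₀ lam₂ := hS.2.2
      have habn : lam₀ < min (ns n).2.1 (ns n).2.2 := lt_min han.1 hbn.1
      have hPn := hθP (ns n).2.1 (ns n).2.2 habn (ns n).1 hwn
      refine ⟨hPn.1, ?_⟩
      have hb' := mbound (ns n).2.1 (ns n).2.2 habn han.2 hbn.2 (ns n).1 hwn
        _ hPn.1 (hPn.2 0 N.zero_mem)
      have hnrm1 : lam₀*lam₂*C^2*‖(ns n).1‖^2 ≤ lam₀*lam₂*C^2*(‖q₀.1‖+1)^2 := by
        have h0 : (0:ℝ) ≤ ‖(ns n).1‖ := norm_nonneg _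
        have h1 : ‖(ns n).1‖^2 ≤ (‖q₀.1‖+1)^2 := by nlinarith [norm_nonneg q₀.1]
        nlinarith [mul_nonneg (mul_nonneg hlam₀.le hl2.le) (sq_nonneg C), h1]
      have hsq : ‖θ (ns n).2.1 (ns n).2.2 (ns n).1‖^2 ≤ B2 := by
        rw [hB2, le_div_iff₀ (by linarith : (0:ℝ) < cs - lam₀)]
        nlinarith [sq_nonneg ‖θ (ns n).2.1 (ns n).2.2 (ns n).1‖]
      have := Real.sqrt_le_sqrt hsq
      rw [Real.sqrt_sq (norm_nonneg _)] at this
      simpa [Metric.mem_closedBall, dist_zero_right, hB] using this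
    obtain ⟨vstar, hvstarK, φ, hφmono, hφtends⟩ := hK.tendsto_subseq' hbnd.frequently
    have hqφ : Filter.Tendsto (fun i => ns (φ i)) Filter.atTop (nhds q₀) :=
      hns1.comp hφmono.tendsto_atTop
    have hmem' : ∀ᶠ i in Filter.atTop, ns (φ i) ∈
        ((E ⊔ M : Submodule ℝ H) : Set H) ×ˢ (Set.Ioo lam₀ lam₂ ×ˢ Set.Ioo lam₀ lam₂) :=
      hφmono.tendsto_atTop.eventually hns2
    have hmax : ∀ v ∈ N, I (v + q₀.1) q₀.2.1 q₀.2.2 ≤ I (vstar + q₀.1) q₀.2.1 q₀.2.2 := by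
      intro v hv
      have lim1 : Filter.Tendsto
          (fun i => I (v + (ns (φ i)).1) (ns (φ i)).2.1 (ns (φ i)).2.2)
          Filter.atTop (nhds (I (v + q₀.1) q₀.2.1 q₀.2.2)) :=
        (hIcont.tendsto (v, q₀)).comp (tendsto_const_nhds.prodMk_nhds hqφ)
      have lim2 : Filter.Tendsto
          (fun i => I (θ (ns (φ i)).2.1 (ns (φ i)).2.2 (ns (φ i)).1 + (ns (φ i)).1)
            (ns (φ i)).2.1 (ns (φ i)).2.2)
          Filter.atTop (nhds (I (vstar + q₀.1) q₀.2.1 q₀.2.2)) :=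
        (hIcont.tendsto (vstar, q₀)).comp (hφtends.prodMk_nhds hqφ)
      refine le_of_tendsto_of_tendsto lim1 lim2 ?_
      filter_upwards [hmem'] with i hi
      have habn : lam₀ < min (ns (φ i)).2.1 (ns (φ i)).2.2 := lt_min hi.2.1.1 hi.2.2.1
      exact (hθP (ns (φ i)).2.1 (ns (φ i)).2.2 habn (ns (φ i)).1 hi.1).2 v hv
    have hvθ : vstar = θ q₀.2.1 q₀.2.2 q₀.1 :=
      hθuniq q₀.2.1 q₀.2.2 hab₀ q₀.1 hw₀ vstar ⟨hvstarK.1, hmax⟩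
    refine ⟨φ, ?_⟩
    show Filter.Tendsto _ Filter.atTop (nhds (θ q₀.2.1 q₀.2.2 q₀.1))
    rw [← hvθ]
    exact hφtends
  · intro w hw
    have hab : lam₀ < min lam₁ lam₁ := by rw [min_self]; exact hlam₀₁
    have h0 : P lam₁ lam₁ w 0 := by
      refine ⟨N.zero_mem, EL_to_max lam₁ lam₁ hab w 0 N.zero_mem ?_⟩
      intro z hz
      have hO := horth w hw z hz
      have e1 : ⟪w, z⟫ = 0 := by rw [real_inner_comm]; exact hO.1
      have e2 : ⟪ι w, ι z⟫ = 0 := by rw [real_inner_comm]; exact hO.2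
      rw [zero_add, Tv_diag, real_inner_smul_left, e1, e2, mul_zero]
    exact (hθuniq lam₁ lam₁ hab w hw 0 h0).symm
end

section
/- For every (a, b) ∈ Q_k and every v ∈ N_k there exists a unique w = τ(v, a, b) ∈ M_k such that I(v + τ(v,a,b), a, b) = inf_{w' ∈ M_k} I(v + w', a, b). Moreover: (1) for w ∈ M_k, w = τ(v, a, b) if and only if ⟨v + w, z⟩ = ∫_Ω ( b (v+w)⁺ − a (v+w)⁻ ) z dμ for all z ∈ M_k; (2) τ is positively homogeneous: τ(t v, a, b) = t τ(v, a, b) for all t ≥ 0; (3) the map (v, a, b) ↦ τ(v, a, b) is continuous on N_k × Q_k; (4) τ(v, λ_k, λ_k) = 0 for all v ∈ N_k. -/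
open MeasureTheory RealInnerProductSpace

set_option maxHeartbeats 1000000
open MeasureTheory RealInnerProductSpace
namespace TauRed
variable {Ω : Type*} [MeasurableSpace Ω] {μ : Measure Ω}

lemma inner_eq_integral (f g : Lp ℝ 2 μ) : ⟪f, g⟫ = ∫ x, f x * g x ∂μ := by
  rw [MeasureTheory.L2.inner_def]; simp [RCLike.inner_apply]; congr 1; funext x; ring

lemma integrable_mul (f g : Lp ℝ 2 μ) : Integrable (fun x => f x * g x) μ := by
  simpa [RCLike.inner_apply] using MeasureTheory.L2.integrable_inner (𝕜 := ℝ) g f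

noncomputable def Sop (a b : ℝ) (f : Lp ℝ 2 μ) : Lp ℝ 2 μ :=
  b • Lp.posPart f - a • Lp.negPart f

lemma negPart_coe (f : Lp ℝ 2 μ) : ⇑(Lp.negPart f) =ᵐ[μ] fun x => max (-f x) 0 := by
  filter_upwards [Lp.coeFn_negPart f] with x h
  rw [h]
  rcases le_total (f x) 0 with hx | hx
  · rw [min_eq_left hx, max_eq_left (by linarith)]
  · rw [min_eq_right hx, max_eq_right (by linarith)]; ring

lemma Sop_coe (a b : ℝ) (f : Lp ℝ 2 μ) :
    ⇑(Sop a b f) =ᵐ[μ] fun x => b * max (f x) 0 - a * max (-f x) 0 := by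
  filter_upwards [Lp.coeFn_sub (b • Lp.posPart f) (a • Lp.negPart f),
    Lp.coeFn_smul b (Lp.posPart f), Lp.coeFn_smul a (Lp.negPart f),
    Lp.coeFn_posPart f, negPart_coe f] with x h1 h2 h3 h4 h5
  simp only [Sop, h1, Pi.sub_apply, h2, h3, Pi.smul_apply, smul_eq_mul, h4, h5]

noncomputable def Gfun (a b : ℝ) (f : Lp ℝ 2 μ) : ℝ :=
  (b * ‖Lp.posPart f‖ ^ 2 + a * ‖Lp.negPart f‖ ^ 2) / 2

lemma norm_sq_eq_integral (f : Lp ℝ 2 μ) : ‖f‖ ^ 2 = ∫ x, f x * f x ∂μ := by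
  rw [← real_inner_self_eq_norm_sq, inner_eq_integral]


section RealLemmas
variable {a b a' b' s t : ℝ}

lemma max_smul_aux {t : ℝ} (s : ℝ) (ht : 0 ≤ t) : max (t * s) 0 = t * max s 0 := by
  rcases le_total s 0 with hs | hs
  · rw [max_eq_right (mul_nonpos_of_nonneg_of_nonpos ht hs), max_eq_right hs, mul_zero]
  · rw [max_eq_left (mul_nonneg ht hs), max_eq_left hs]

lemma r_sub (s : ℝ) : max s 0 - max (-s) 0 = s := by
  rcases le_total s 0 with hs | hs
  · rw [max_eq_right hs, max_eq_left (by linarith)]; ring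
  · rw [max_eq_left hs, max_eq_right (by linarith)]; ring

lemma r_lower (ha : 0 ≤ a) (hb : 0 ≤ b) (s t : ℝ) :
    2 * ((b * max s 0 - a * max (-s) 0) * (t - s)) ≤
      (b * (max t 0 * max t 0) + a * (max (-t) 0 * max (-t) 0)) -
      (b * (max s 0 * max s 0) + a * (max (-s) 0 * max (-s) 0)) := by
  rcases le_total s 0 with hs | hs <;> rcases le_total t 0 with ht | ht
  · rw [max_eq_right hs, max_eq_left (by linarith : (0:ℝ) ≤ -s),
      max_eq_right ht, max_eq_left (by linarith : (0:ℝ) ≤ -t)]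
    nlinarith [sq_nonneg (t - s)]
  · rw [max_eq_right hs, max_eq_left (by linarith : (0:ℝ) ≤ -s),
      max_eq_left ht, max_eq_right (by linarith : -t ≤ (0:ℝ))]
    nlinarith [sq_nonneg t, sq_nonneg s, mul_nonneg hb (sq_nonneg t), mul_nonneg ha (sq_nonneg s), mul_nonneg (mul_nonneg ha (neg_nonneg.2 hs)) ht, mul_nonneg (mul_nonneg hb (neg_nonneg.2 hs)) ht]
  · rw [max_eq_left hs, max_eq_right (by linarith : -s ≤ (0:ℝ)),
      max_eq_right ht, max_eq_left (by linarith : (0:ℝ) ≤ -t)]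
    nlinarith [mul_nonneg (mul_nonneg hb hs) (neg_nonneg.2 ht), mul_nonneg (mul_nonneg ha hs) (neg_nonneg.2 ht), mul_nonneg hb (sq_nonneg s), mul_nonneg ha (sq_nonneg t)]
  · rw [max_eq_left hs, max_eq_right (by linarith : -s ≤ (0:ℝ)),
      max_eq_left ht, max_eq_right (by linarith : -t ≤ (0:ℝ))]
    nlinarith [mul_nonneg hb (sq_nonneg (t - s))]

lemma r_upper (ha : 0 ≤ a) (hb : 0 ≤ b) (s t : ℝ) :
    (b * (max t 0 * max t 0) + a * (max (-t) 0 * max (-t) 0)) -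
      (b * (max s 0 * max s 0) + a * (max (-s) 0 * max (-s) 0)) ≤
    2 * ((b * max s 0 - a * max (-s) 0) * (t - s)) + max a b * ((t - s) * (t - s)) := by
  have hca : a ≤ max a b := le_max_left a b
  have hcb : b ≤ max a b := le_max_right a b
  rcases le_total s 0 with hs | hs <;> rcases le_total t 0 with ht | ht
  · rw [max_eq_right hs, max_eq_left (by linarith : (0:ℝ) ≤ -s),
      max_eq_right ht, max_eq_left (by linarith : (0:ℝ) ≤ -t)]
    nlinarith [sq_nonneg (t - s)]
  · rw [max_eq_right hs, max_eq_left (by linarith : (0:ℝ) ≤ -s),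
      max_eq_left ht, max_eq_right (by linarith : -t ≤ (0:ℝ))]
    nlinarith [mul_nonneg (sub_nonneg.2 hcb) (sq_nonneg t), mul_nonneg (sub_nonneg.2 hca) (sq_nonneg s), mul_nonneg (mul_nonneg (sub_nonneg.2 hca) (neg_nonneg.2 hs)) ht]
  · rw [max_eq_left hs, max_eq_right (by linarith : -s ≤ (0:ℝ)),
      max_eq_right ht, max_eq_left (by linarith : (0:ℝ) ≤ -t)]
    nlinarith [mul_nonneg (sub_nonneg.2 hcb) (sq_nonneg s), mul_nonneg (sub_nonneg.2 hca) (sq_nonneg t), mul_nonneg (mul_nonneg (sub_nonneg.2 hcb) hs) (neg_nonneg.2 ht)]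
  · rw [max_eq_left hs, max_eq_right (by linarith : -s ≤ (0:ℝ)),
      max_eq_left ht, max_eq_right (by linarith : -t ≤ (0:ℝ))]
    nlinarith [mul_nonneg (sub_nonneg.2 hcb) (sq_nonneg (t - s))]

lemma r_sq_lip (ha : 0 ≤ a) (hb : 0 ≤ b) (s t : ℝ) :
    ((b * max s 0 - a * max (-s) 0) - (b * max t 0 - a * max (-t) 0)) *
      ((b * max s 0 - a * max (-s) 0) - (b * max t 0 - a * max (-t) 0)) ≤
    (max a b * max a b) * ((s - t) * (s - t)) := by
  have hca : a ≤ max a b := le_max_left a b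
  have hcb : b ≤ max a b := le_max_right a b
  rcases le_total s 0 with hs | hs <;> rcases le_total t 0 with ht | ht
  · rw [max_eq_right hs, max_eq_left (by linarith : (0:ℝ) ≤ -s),
      max_eq_right ht, max_eq_left (by linarith : (0:ℝ) ≤ -t)]
    nlinarith [mul_nonneg (mul_nonneg (sub_nonneg.2 hca) (by linarith : (0:ℝ) ≤ max a b + a)) (sq_nonneg (s - t))]
  · rw [max_eq_right hs, max_eq_left (by linarith : (0:ℝ) ≤ -s),
      max_eq_left ht, max_eq_right (by linarith : -t ≤ (0:ℝ))]
    nlinarith [sq_nonneg t, sq_nonneg s, mul_nonneg (mul_nonneg ha hb) (mul_nonneg (neg_nonneg.2 hs) ht), mul_nonneg (sub_nonneg.2 hcb) (mul_nonneg (by linarith : (0:ℝ) ≤ max a b + b) (sq_nonneg t)), mul_nonneg (sub_nonneg.2 hca) (mul_nonneg (by linarith : (0:ℝ) ≤ max a b + a) (sq_nonneg s)), mul_nonneg (mul_nonneg (by nlinarith : (0:ℝ) ≤ max a b * max a b - a*b) (neg_nonneg.2 hs)) ht]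
  · rw [max_eq_left hs, max_eq_right (by linarith : -s ≤ (0:ℝ)),
      max_eq_right ht, max_eq_left (by linarith : (0:ℝ) ≤ -t)]
    nlinarith [sq_nonneg t, sq_nonneg s, mul_nonneg (sub_nonneg.2 hcb) (mul_nonneg (by linarith : (0:ℝ) ≤ max a b + b) (sq_nonneg s)), mul_nonneg (sub_nonneg.2 hca) (mul_nonneg (by linarith : (0:ℝ) ≤ max a b + a) (sq_nonneg t)), mul_nonneg (mul_nonneg (by nlinarith : (0:ℝ) ≤ max a b * max a b - a*b) hs) (neg_nonneg.2 ht)]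
  · rw [max_eq_left hs, max_eq_right (by linarith : -s ≤ (0:ℝ)),
      max_eq_left ht, max_eq_right (by linarith : -t ≤ (0:ℝ))]
    nlinarith [mul_nonneg (sub_nonneg.2 hcb) (mul_nonneg (by linarith : (0:ℝ) ≤ max a b + b) (sq_nonneg (s-t)))]

lemma r_sq_param (s : ℝ) :
    ((b * max s 0 - a * max (-s) 0) - (b' * max s 0 - a' * max (-s) 0)) *
      ((b * max s 0 - a * max (-s) 0) - (b' * max s 0 - a' * max (-s) 0)) ≤
    ((|a - a'| + |b - b'|) * (|a - a'| + |b - b'|)) * (s * s) := by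
  have h1 : |b - b'| * |b - b'| = (b - b') * (b - b') := by rw [← abs_mul, abs_mul_self]
  have h2 : |a - a'| * |a - a'| = (a - a') * (a - a') := by rw [← abs_mul, abs_mul_self]
  have h3 : 0 ≤ |a - a'| := abs_nonneg _
  have h4 : 0 ≤ |b - b'| := abs_nonneg _
  rcases le_total s 0 with hs | hs
  · rw [max_eq_right hs, max_eq_left (by linarith : (0:ℝ) ≤ -s)]
    nlinarith [mul_nonneg (mul_nonneg h4 h3) (sq_nonneg s), mul_nonneg (mul_nonneg h4 h4) (sq_nonneg s)]
  · rw [max_eq_left hs, max_eq_right (by linarith : -s ≤ (0:ℝ))]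
    nlinarith [mul_nonneg (mul_nonneg h4 h3) (sq_nonneg s), mul_nonneg (mul_nonneg h3 h3) (sq_nonneg s)]

end RealLemmas

lemma integrable_G (a b : ℝ) (f : Lp ℝ 2 μ) :
    Integrable (fun x => b * (Lp.posPart f x * Lp.posPart f x) +
      a * (Lp.negPart f x * Lp.negPart f x)) μ :=
  ((integrable_mul _ _).const_mul b).add ((integrable_mul _ _).const_mul a)

lemma Gfun_eq_integral (a b : ℝ) (f : Lp ℝ 2 μ) :
    Gfun a b f = (∫ x, (b * (Lp.posPart f x * Lp.posPart f x) +
      a * (Lp.negPart f x * Lp.negPart f x)) ∂μ) / 2 := by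
  rw [Gfun, integral_add ((integrable_mul _ _).const_mul b) ((integrable_mul _ _).const_mul a),
    integral_const_mul, integral_const_mul, ← norm_sq_eq_integral, ← norm_sq_eq_integral]

lemma Gfun_eq_integral' (a b : ℝ) (f : Lp ℝ 2 μ) :
    Gfun a b f = (∫ x, (b * (Lp.posPart f) x ^ 2 + a * (Lp.negPart f) x ^ 2) ∂μ) / 2 := by
  rw [Gfun_eq_integral]; congr 1; apply integral_congr_ae; filter_upwards with x; ring

lemma inner_Sop (a b : ℝ) (f z : Lp ℝ 2 μ) :
    ⟪Sop a b f, z⟫ = ∫ x, (b * (Lp.posPart f) x - a * (Lp.negPart f) x) * z x ∂μ := by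
  rw [inner_eq_integral]
  apply integral_congr_ae
  filter_upwards [Lp.coeFn_sub (b • Lp.posPart f) (a • Lp.negPart f),
    Lp.coeFn_smul b (Lp.posPart f), Lp.coeFn_smul a (Lp.negPart f)] with x h1 h2 h3
  simp only [Sop, h1, Pi.sub_apply, h2, h3, Pi.smul_apply, smul_eq_mul]


section L2Lemmas
variable {a b a' b' : ℝ}

lemma G_lower (ha : 0 ≤ a) (hb : 0 ≤ b) (f g : Lp ℝ 2 μ) :
    Gfun a b f + ⟪Sop a b f, g - f⟫ ≤ Gfun a b g := by
  have hA := integrable_G a b g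
  have hB := integrable_G a b f
  have hC := integrable_mul (Sop a b f) (g - f)
  have hAB : Integrable (fun x => (fun x => b * (Lp.posPart g x * Lp.posPart g x) + a * (Lp.negPart g x * Lp.negPart g x)) x - (fun x => b * (Lp.posPart f x * Lp.posPart f x) + a * (Lp.negPart f x * Lp.negPart f x)) x) μ := hA.sub hB
  have hC2 : Integrable (fun x => 2 * (fun x => (Sop a b f) x * (g - f) x) x) μ := hC.const_mul 2
  have key : 0 ≤ ∫ x, ((fun x => b * (Lp.posPart g x * Lp.posPart g x) + a * (Lp.negPart g x * Lp.negPart g x)) x - (fun x => b * (Lp.posPart f x * Lp.posPart f x) + a * (Lp.negPart f x * Lp.negPart f x)) x - 2 * (fun x => (Sop a b f) x * (g - f) x) x) ∂μ := by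
    apply integral_nonneg_of_ae
    filter_upwards [Lp.coeFn_posPart g, negPart_coe g, Lp.coeFn_posPart f, negPart_coe f,
      Sop_coe a b f, Lp.coeFn_sub g f] with x h1 h2 h3 h4 h5 h6
    simp only [Pi.zero_apply, h1, h2, h3, h4, h5, h6, Pi.sub_apply]
    have := r_lower ha hb (f x) (g x)
    linarith
  have e1 : ∫ x, ((fun x => b * (Lp.posPart g x * Lp.posPart g x) + a * (Lp.negPart g x * Lp.negPart g x)) x - (fun x => b * (Lp.posPart f x * Lp.posPart f x) + a * (Lp.negPart f x * Lp.negPart f x)) x - 2 * (fun x => (Sop a b f) x * (g - f) x) x) ∂μ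
      = (∫ x, ((fun x => b * (Lp.posPart g x * Lp.posPart g x) + a * (Lp.negPart g x * Lp.negPart g x)) x - (fun x => b * (Lp.posPart f x * Lp.posPart f x) + a * (Lp.negPart f x * Lp.negPart f x)) x) ∂μ) - ∫ x, 2 * (fun x => (Sop a b f) x * (g - f) x) x ∂μ := integral_sub hAB hC2
  have e2 : ∫ x, ((fun x => b * (Lp.posPart g x * Lp.posPart g x) + a * (Lp.negPart g x * Lp.negPart g x)) x - (fun x => b * (Lp.posPart f x * Lp.posPart f x) + a * (Lp.negPart f x * Lp.negPart f x)) x) ∂μ = (∫ x, (fun x => b * (Lp.posPart g x * Lp.posPart g x) + a * (Lp.negPart g x * Lp.negPart g x)) x ∂μ) - ∫ x, (fun x => b * (Lp.posPart f x * Lp.posPart f x) + a * (Lp.negPart f x * Lp.negPart f x)) x ∂μ :=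
    integral_sub hA hB
  have e3 : ∫ x, 2 * (fun x => (Sop a b f) x * (g - f) x) x ∂μ = 2 * ∫ x, (fun x => (Sop a b f) x * (g - f) x) x ∂μ := integral_const_mul 2 _
  rw [e1, e2, e3] at key
  rw [Gfun_eq_integral, Gfun_eq_integral, inner_eq_integral]
  linarith

lemma G_upper (ha : 0 ≤ a) (hb : 0 ≤ b) (f g : Lp ℝ 2 μ) :
    Gfun a b g ≤ Gfun a b f + ⟪Sop a b f, g - f⟫ + max a b / 2 * ‖g - f‖ ^ 2 := by
  have hA := integrable_G a b g
  have hB := integrable_G a b f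
  have hC := integrable_mul (Sop a b f) (g - f)
  have hD := integrable_mul (g - f) (g - f)
  have hAB : Integrable (fun x => (fun x => b * (Lp.posPart g x * Lp.posPart g x) + a * (Lp.negPart g x * Lp.negPart g x)) x - (fun x => b * (Lp.posPart f x * Lp.posPart f x) + a * (Lp.negPart f x * Lp.negPart f x)) x) μ := hA.sub hB
  have hCD : Integrable (fun x => 2 * (fun x => (Sop a b f) x * (g - f) x) x + max a b * (fun x => (g - f) x * (g - f) x) x) μ :=
    (hC.const_mul 2).add (hD.const_mul (max a b))
  have key : 0 ≤ ∫ x, (2 * (fun x => (Sop a b f) x * (g - f) x) x + max a b * (fun x => (g - f) x * (g - f) x) x - ((fun x => b * (Lp.posPart g x * Lp.posPart g x) + a * (Lp.negPart g x * Lp.negPart g x)) x - (fun x => b * (Lp.posPart f x * Lp.posPart f x) + a * (Lp.negPart f x * Lp.negPart f x)) x)) ∂μ := by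
    apply integral_nonneg_of_ae
    filter_upwards [Lp.coeFn_posPart g, negPart_coe g, Lp.coeFn_posPart f, negPart_coe f,
      Sop_coe a b f, Lp.coeFn_sub g f] with x h1 h2 h3 h4 h5 h6
    simp only [Pi.zero_apply, h1, h2, h3, h4, h5, h6, Pi.sub_apply]
    have := r_upper ha hb (f x) (g x)
    linarith
  have e1 : ∫ x, (2 * (fun x => (Sop a b f) x * (g - f) x) x + max a b * (fun x => (g - f) x * (g - f) x) x - ((fun x => b * (Lp.posPart g x * Lp.posPart g x) + a * (Lp.negPart g x * Lp.negPart g x)) x - (fun x => b * (Lp.posPart f x * Lp.posPart f x) + a * (Lp.negPart f x * Lp.negPart f x)) x)) ∂μ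
      = (∫ x, (2 * (fun x => (Sop a b f) x * (g - f) x) x + max a b * (fun x => (g - f) x * (g - f) x) x) ∂μ) - ∫ x, ((fun x => b * (Lp.posPart g x * Lp.posPart g x) + a * (Lp.negPart g x * Lp.negPart g x)) x - (fun x => b * (Lp.posPart f x * Lp.posPart f x) + a * (Lp.negPart f x * Lp.negPart f x)) x) ∂μ :=
    integral_sub hCD hAB
  have e2 : ∫ x, (2 * (fun x => (Sop a b f) x * (g - f) x) x + max a b * (fun x => (g - f) x * (g - f) x) x) ∂μ
      = (∫ x, 2 * (fun x => (Sop a b f) x * (g - f) x) x ∂μ) + ∫ x, max a b * (fun x => (g - f) x * (g - f) x) x ∂μ :=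
    integral_add (hC.const_mul 2) (hD.const_mul (max a b))
  have e3 : ∫ x, ((fun x => b * (Lp.posPart g x * Lp.posPart g x) + a * (Lp.negPart g x * Lp.negPart g x)) x - (fun x => b * (Lp.posPart f x * Lp.posPart f x) + a * (Lp.negPart f x * Lp.negPart f x)) x) ∂μ = (∫ x, (fun x => b * (Lp.posPart g x * Lp.posPart g x) + a * (Lp.negPart g x * Lp.negPart g x)) x ∂μ) - ∫ x, (fun x => b * (Lp.posPart f x * Lp.posPart f x) + a * (Lp.negPart f x * Lp.negPart f x)) x ∂μ :=
    integral_sub hA hB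
  have e4 : ∫ x, 2 * (fun x => (Sop a b f) x * (g - f) x) x ∂μ = 2 * ∫ x, (fun x => (Sop a b f) x * (g - f) x) x ∂μ := integral_const_mul 2 _
  have e5 : ∫ x, max a b * (fun x => (g - f) x * (g - f) x) x ∂μ = max a b * ∫ x, (fun x => (g - f) x * (g - f) x) x ∂μ := integral_const_mul _ _
  rw [e1, e2, e3, e4, e5] at key
  rw [Gfun_eq_integral, Gfun_eq_integral, inner_eq_integral]
  rw [show ‖g - f‖ ^ 2 = ∫ x, (g - f) x * (g - f) x ∂μ from norm_sq_eq_integral _]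
  linarith

lemma norm_Sop_sub_le (ha : 0 ≤ a) (hb : 0 ≤ b) (f g : Lp ℝ 2 μ) :
    ‖Sop a b f - Sop a b g‖ ≤ max a b * ‖f - g‖ := by
  have hc : 0 ≤ max a b * ‖f - g‖ := mul_nonneg (le_trans ha (le_max_left a b)) (norm_nonneg _)
  have h1 : ‖Sop a b f - Sop a b g‖ ^ 2 ≤ (max a b * ‖f - g‖) ^ 2 := by
    rw [norm_sq_eq_integral]
    have h2 : (max a b * ‖f - g‖) ^ 2 =
        ∫ x, (max a b * max a b) * ((f - g) x * (f - g) x) ∂μ := by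
      rw [mul_pow, norm_sq_eq_integral, ← integral_const_mul]
      congr 1; funext x; ring
    rw [h2]
    apply integral_mono_ae (integrable_mul _ _) ((integrable_mul _ _).const_mul _)
    filter_upwards [Lp.coeFn_sub (Sop a b f) (Sop a b g), Sop_coe a b f, Sop_coe a b g,
      Lp.coeFn_sub f g] with x e1 e2 e3 e4
    simp only [e1, Pi.sub_apply, e2, e3, e4]
    exact r_sq_lip ha hb (f x) (g x)
  calc ‖Sop a b f - Sop a b g‖ = √(‖Sop a b f - Sop a b g‖ ^ 2) :=
        (Real.sqrt_sq (norm_nonneg _)).symm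
    _ ≤ √((max a b * ‖f - g‖) ^ 2) := Real.sqrt_le_sqrt h1
    _ = max a b * ‖f - g‖ := Real.sqrt_sq hc

lemma norm_Sop_param (a b a' b' : ℝ) (f : Lp ℝ 2 μ) :
    ‖Sop a b f - Sop a' b' f‖ ≤ (|a - a'| + |b - b'|) * ‖f‖ := by
  have hc : 0 ≤ (|a - a'| + |b - b'|) * ‖f‖ :=
    mul_nonneg (add_nonneg (abs_nonneg _) (abs_nonneg _)) (norm_nonneg _)
  have h1 : ‖Sop a b f - Sop a' b' f‖ ^ 2 ≤ ((|a - a'| + |b - b'|) * ‖f‖) ^ 2 := by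
    rw [norm_sq_eq_integral]
    have h2 : ((|a - a'| + |b - b'|) * ‖f‖) ^ 2 =
        ∫ x, ((|a - a'| + |b - b'|) * (|a - a'| + |b - b'|)) * (f x * f x) ∂μ := by
      rw [mul_pow, norm_sq_eq_integral, ← integral_const_mul]
      congr 1; funext x; ring
    rw [h2]
    apply integral_mono_ae (integrable_mul _ _) ((integrable_mul _ _).const_mul _)
    filter_upwards [Lp.coeFn_sub (Sop a b f) (Sop a' b' f), Sop_coe a b f,
      Sop_coe a' b' f] with x e1 e2 e3
    simp only [e1, Pi.sub_apply, e2, e3]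
    exact r_sq_param (f x)
  calc ‖Sop a b f - Sop a' b' f‖ = √(‖Sop a b f - Sop a' b' f‖ ^ 2) :=
        (Real.sqrt_sq (norm_nonneg _)).symm
    _ ≤ √(((|a - a'| + |b - b'|) * ‖f‖) ^ 2) := Real.sqrt_le_sqrt h1
    _ = (|a - a'| + |b - b'|) * ‖f‖ := Real.sqrt_sq hc

lemma Sop_smul {t : ℝ} (ht : 0 ≤ t) (a b : ℝ) (f : Lp ℝ 2 μ) :
    Sop a b (t • f) = t • Sop a b f := by
  apply Lp.ext
  filter_upwards [Sop_coe a b (t • f), Lp.coeFn_smul t (Sop a b f), Sop_coe a b f,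
    Lp.coeFn_smul t f] with x h1 h2 h3 h4
  rw [h1, h2]
  simp only [Pi.smul_apply, smul_eq_mul] at h4 ⊢
  rw [h4, h3, max_smul_aux _ ht, show -(t * f x) = t * (-(f x)) by ring, max_smul_aux _ ht]
  ring

lemma Sop_diag (a : ℝ) (f : Lp ℝ 2 μ) : Sop a a f = a • f := by
  apply Lp.ext
  filter_upwards [Sop_coe a a f, Lp.coeFn_smul a f] with x h1 h2
  rw [h1, h2]
  simp only [Pi.smul_apply, smul_eq_mul]
  have h3 := r_sub (f x)
  linear_combination a * h3

lemma Sop_zero (a b : ℝ) : Sop a b (0 : Lp ℝ 2 μ) = 0 := by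
  have h := Sop_smul (le_refl (0:ℝ)) a b (0 : Lp ℝ 2 μ)
  rwa [zero_smul, zero_smul] at h

lemma norm_Sop_le (ha : 0 ≤ a) (hb : 0 ≤ b) (f : Lp ℝ 2 μ) :
    ‖Sop a b f‖ ≤ max a b * ‖f‖ := by
  simpa [Sop_zero, sub_zero] using norm_Sop_sub_le ha hb f 0

end L2Lemmas

section Hilbert
variable {H : Type*} [NormedAddCommGroup H] [InnerProductSpace ℝ H]

/-- The reduced functional. -/
noncomputable def Ifun (ι : H →ₗ[ℝ] Lp ℝ 2 μ) (a b : ℝ) (u : H) : ℝ :=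
  ‖u‖ ^ 2 / 2 - Gfun a b (ι u)

/-- The Euler–Lagrange condition. -/
def EL (ι : H →ₗ[ℝ] Lp ℝ 2 μ) (M : Submodule ℝ H) (a b : ℝ) (v w : H) : Prop :=
  w ∈ M ∧ ∀ z ∈ M, ⟪v + w, z⟫ = ⟪Sop a b (ι (v + w)), ι z⟫

variable {ι : H →ₗ[ℝ] Lp ℝ 2 μ} {M : Submodule ℝ H} {lam₂ : ℝ} {a b a' b' : ℝ}

lemma Ifun_expand (a b : ℝ) (u z : H) :
    Ifun ι a b (u + z) = Ifun ι a b u + ⟪u, z⟫ + ‖z‖ ^ 2 / 2 -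
      (Gfun a b (ι u + ι z) - Gfun a b (ι u)) := by
  unfold Ifun
  rw [map_add, norm_add_sq_real]
  ring

lemma est_upper (ha : 0 ≤ a) (hb : 0 ≤ b) (u z : H) :
    Ifun ι a b u + ⟪u, z⟫ - ⟪Sop a b (ι u), ι z⟫ + ‖z‖ ^ 2 / 2
      - max a b / 2 * ‖ι z‖ ^ 2 ≤ Ifun ι a b (u + z) := by
  have h := G_upper ha hb (ι u) (ι u + ι z)
  rw [add_sub_cancel_left] at h
  rw [Ifun_expand]
  linarith

lemma est_lower (ha : 0 ≤ a) (hb : 0 ≤ b) (u z : H) :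
    Ifun ι a b (u + z) ≤ Ifun ι a b u + ⟪u, z⟫ - ⟪Sop a b (ι u), ι z⟫ + ‖z‖ ^ 2 / 2 := by
  have h := G_lower ha hb (ι u) (ι u + ι z)
  rw [add_sub_cancel_left] at h
  rw [Ifun_expand]
  linarith

lemma quad_bound (hlam₂ : 0 < lam₂) (hM : ∀ w ∈ M, lam₂ * ‖ι w‖ ^ 2 ≤ ‖w‖ ^ 2)
    (hc : 0 ≤ max a b) {z : H} (hz : z ∈ M) :
    max a b * ‖ι z‖ ^ 2 ≤ max a b / lam₂ * ‖z‖ ^ 2 := by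
  have h := hM z hz
  rw [div_mul_eq_mul_div, le_div_iff₀ hlam₂]
  nlinarith

lemma est_upperM (hlam₂ : 0 < lam₂) (hM : ∀ w ∈ M, lam₂ * ‖ι w‖ ^ 2 ≤ ‖w‖ ^ 2)
    (ha : 0 ≤ a) (hb : 0 ≤ b) (u : H) {z : H} (hz : z ∈ M) :
    Ifun ι a b u + ⟪u, z⟫ - ⟪Sop a b (ι u), ι z⟫
      + (1 - max a b / lam₂) / 2 * ‖z‖ ^ 2 ≤ Ifun ι a b (u + z) := by
  have h1 := est_upper (ι := ι) ha hb u z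
  have h2 := quad_bound hlam₂ hM (le_trans ha (le_max_left a b)) hz
  linarith

lemma el_min_gap (hlam₂ : 0 < lam₂) (hM : ∀ w ∈ M, lam₂ * ‖ι w‖ ^ 2 ≤ ‖w‖ ^ 2)
    (ha : 0 ≤ a) (hb : 0 ≤ b) {v w : H} (hel : EL ι M a b v w) {w' : H} (hw' : w' ∈ M) :
    Ifun ι a b (v + w) + (1 - max a b / lam₂) / 2 * ‖w' - w‖ ^ 2 ≤ Ifun ι a b (v + w') := by
  have hz : w' - w ∈ M := M.sub_mem hw' hel.1
  have h1 := est_upperM hlam₂ hM ha hb (v + w) hz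
  rw [show v + w + (w' - w) = v + w' by abel] at h1
  have h2 := hel.2 (w' - w) hz
  linarith

lemma min_el (ha : 0 ≤ a) (hb : 0 ≤ b) {v w : H} (hw : w ∈ M)
    (hmin : ∀ w' ∈ M, Ifun ι a b (v + w) ≤ Ifun ι a b (v + w')) : EL ι M a b v w := by
  have aux : ∀ z ∈ M, 0 ≤ ⟪v + w, z⟫ - ⟪Sop a b (ι (v + w)), ι z⟫ := by
    intro z hz
    rcases eq_or_ne z 0 with rfl | hzne
    · simp
    have hz2 : (0:ℝ) < ‖z‖ ^ 2 := pow_pos (norm_pos_iff.mpr hzne) 2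
    set D : ℝ := ⟪v + w, z⟫ - ⟪Sop a b (ι (v + w)), ι z⟫ with hD
    by_contra hneg
    push_neg at hneg
    set t : ℝ := -D / ‖z‖ ^ 2 with ht_def
    have ht : 0 < t := div_pos (by linarith) hz2
    have hkey : 0 ≤ t * D + t ^ 2 * ‖z‖ ^ 2 / 2 := by
      have hmem : w + t • z ∈ M := M.add_mem hw (M.smul_mem t hz)
      have h1 := hmin (w + t • z) hmem
      have h2 := est_lower (ι := ι) ha hb (v + w) (t • z)
      rw [show v + w + t • z = v + (w + t • z) by abel] at h2
      have e1 : ⟪v + w, t • z⟫ = t * ⟪v + w, z⟫ := real_inner_smul_right _ _ _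
      have e2 : ⟪Sop a b (ι (v + w)), ι (t • z)⟫ = t * ⟪Sop a b (ι (v + w)), ι z⟫ := by
        rw [LinearMap.map_smul, real_inner_smul_right]
      have e3 : ‖t • z‖ ^ 2 = t ^ 2 * ‖z‖ ^ 2 := by
        rw [norm_smul, mul_pow, Real.norm_eq_abs, sq_abs]
      rw [e1, e2, e3] at h2
      nlinarith
    have e : t * ‖z‖ ^ 2 = -D := by
      rw [ht_def]
      field_simp
    have e2 : t * (t * ‖z‖ ^ 2) = t * (-D) := by rw [e]
    nlinarith [mul_pos ht (neg_pos.2 hneg)]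
  refine ⟨hw, fun z hz => ?_⟩
  have h1 := aux z hz
  have h2 := aux (-z) (M.neg_mem hz)
  rw [map_neg, inner_neg_right, inner_neg_right] at h2
  linarith

lemma el_unique (hlam₂ : 0 < lam₂) (hM : ∀ w ∈ M, lam₂ * ‖ι w‖ ^ 2 ≤ ‖w‖ ^ 2)
    (ha : 0 ≤ a) (hb : 0 ≤ b) (hab : max a b < lam₂) {v w w' : H}
    (h1 : EL ι M a b v w) (h2 : EL ι M a b v w') : w = w' := by
  have g1 := el_min_gap hlam₂ hM ha hb h1 h2.1
  have g2 := el_min_gap hlam₂ hM ha hb h2 h1.1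
  have hκ : 0 < 1 - max a b / lam₂ := by
    rw [sub_pos, div_lt_one hlam₂]; exact hab
  have e : ‖w' - w‖ ^ 2 = ‖w - w'‖ ^ 2 := by rw [norm_sub_rev]
  have : ‖w - w'‖ ^ 2 ≤ 0 := by nlinarith
  have : ‖w - w'‖ = 0 := by nlinarith [norm_nonneg (w - w'), sq_nonneg ‖w - w'‖]
  have := norm_eq_zero.mp this
  rw [sub_eq_zero] at this
  exact this

lemma midpoint_est (hlam₂ : 0 < lam₂) (hM : ∀ w ∈ M, lam₂ * ‖ι w‖ ^ 2 ≤ ‖w‖ ^ 2)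
    (ha : 0 ≤ a) (hb : 0 ≤ b) (v : H) {w₁ w₂ : H} (h1 : w₁ ∈ M) (h2 : w₂ ∈ M) :
    2 * Ifun ι a b (v + (2⁻¹:ℝ) • (w₁ + w₂)) + (1 - max a b / lam₂) / 4 * ‖w₁ - w₂‖ ^ 2 ≤
      Ifun ι a b (v + w₁) + Ifun ι a b (v + w₂) := by
  set mid := (2⁻¹:ℝ) • (w₁ + w₂) with hmid
  set z := (2⁻¹:ℝ) • (w₁ - w₂) with hz
  have hmemmid : mid ∈ M := M.smul_mem _ (M.add_mem h1 h2)
  have hmemz : z ∈ M := M.smul_mem _ (M.sub_mem h1 h2)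
  have e1 : v + mid + z = v + w₁ := by
    have h : mid + z = w₁ := by
      rw [hmid, hz, ← smul_add,
        show w₁ + w₂ + (w₁ - w₂) = (2:ℝ) • w₁ from by rw [two_smul]; abel, smul_smul]
      norm_num
    rw [add_assoc, h]
  have e2 : v + mid + -z = v + w₂ := by
    have h : mid + -z = w₂ := by
      rw [hmid, hz, ← smul_neg, ← smul_add,
        show w₁ + w₂ + -(w₁ - w₂) = (2:ℝ) • w₂ from by rw [two_smul]; abel, smul_smul]
      norm_num
    rw [add_assoc, h]
  have u1 := est_upperM hlam₂ hM ha hb (v + mid) hmemz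
  have u2 := est_upperM hlam₂ hM ha hb (v + mid) (M.neg_mem hmemz)
  rw [e1] at u1
  rw [e2] at u2
  rw [map_neg, inner_neg_right, inner_neg_right, norm_neg] at u2
  have e3 : ‖z‖ ^ 2 = ‖w₁ - w₂‖ ^ 2 / 4 := by
    rw [hz, norm_smul, mul_pow, Real.norm_eq_abs, sq_abs]
    norm_num
    ring
  rw [e3] at u1 u2
  linarith

end Hilbert

section Hilbert2
variable {H : Type*} [NormedAddCommGroup H] [InnerProductSpace ℝ H]
variable {ι : H →ₗ[ℝ] Lp ℝ 2 μ} {M : Submodule ℝ H} {lam₂ : ℝ} {a b a' b' : ℝ}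

lemma coercive (hlam₂ : 0 < lam₂) (hM : ∀ w ∈ M, lam₂ * ‖ι w‖ ^ 2 ≤ ‖w‖ ^ 2)
    (ha : 0 ≤ a) (hb : 0 ≤ b) {C : ℝ} (hC' : ∀ u : H, ‖ι u‖ ≤ C * ‖u‖) (v : H)
    {w : H} (hw : w ∈ M) :
    Ifun ι a b v - (‖v‖ + max a b * ‖ι v‖ * C) * ‖w‖
      + (1 - max a b / lam₂) / 2 * ‖w‖ ^ 2 ≤ Ifun ι a b (v + w) := by
  have h1 := est_upperM hlam₂ hM ha hb v hw
  have h2 : -(‖v‖ * ‖w‖) ≤ ⟪v, w⟫ := by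
    have := abs_real_inner_le_norm v w
    rw [abs_le] at this
    linarith [this.1]
  have h3 : ⟪Sop a b (ι v), ι w⟫ ≤ max a b * ‖ι v‖ * (C * ‖w‖) := by
    have i1 := real_inner_le_norm (Sop a b (ι v)) (ι w)
    have i2 := norm_Sop_le ha hb (ι v)
    have i3 := hC' w
    have i4 : ‖Sop a b (ι v)‖ * ‖ι w‖ ≤ max a b * ‖ι v‖ * (C * ‖w‖) :=
      mul_le_mul i2 i3 (norm_nonneg _)
        (mul_nonneg (le_trans ha (le_max_left a b)) (norm_nonneg _))
    linarith
  nlinarith [h1, h2, h3]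

lemma Ifun_continuous (a b : ℝ) (hcontι : Continuous fun u : H => ι u) :
    Continuous fun u : H => Ifun ι a b u := by
  have hpos : Continuous fun f : Lp ℝ 2 μ => Lp.posPart f := by
    apply LipschitzWith.continuous (K := 1)
    apply LipschitzWith.of_dist_le_mul
    intro f g
    rw [dist_eq_norm, dist_eq_norm]
    have h := norm_Sop_sub_le (le_refl (0:ℝ)) zero_le_one f g
    simp only [Sop, one_smul, zero_smul, sub_zero] at h
    rw [max_eq_right zero_le_one, one_mul] at h
    simpa using h
  have hneg : Continuous fun f : Lp ℝ 2 μ => Lp.negPart f := by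
    apply LipschitzWith.continuous (K := 1)
    apply LipschitzWith.of_dist_le_mul
    intro f g
    rw [dist_eq_norm, dist_eq_norm]
    have h := norm_Sop_sub_le zero_le_one (le_refl (0:ℝ)) f g
    simp only [Sop, one_smul, zero_smul, zero_sub] at h
    rw [max_eq_left zero_le_one, one_mul] at h
    rw [show -Lp.negPart f - -Lp.negPart g = -(Lp.negPart f - Lp.negPart g) from by abel,
      norm_neg] at h
    simpa using h
  unfold Ifun Gfun
  apply Continuous.sub
  · exact (continuous_norm.pow 2).div_const 2
  · apply Continuous.div_const
    apply Continuous.add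
    · exact continuous_const.mul (((hpos.comp hcontι).norm).pow 2)
    · exact continuous_const.mul (((hneg.comp hcontι).norm).pow 2)

lemma exists_min [CompleteSpace H] (hlam₂ : 0 < lam₂)
    (hM : ∀ w ∈ M, lam₂ * ‖ι w‖ ^ 2 ≤ ‖w‖ ^ 2) (hMcl : IsClosed (M : Set H))
    (ha : 0 ≤ a) (hb : 0 ≤ b) (hab : max a b < lam₂)
    {C : ℝ} (hC' : ∀ u : H, ‖ι u‖ ≤ C * ‖u‖)
    (hcont : Continuous fun u : H => Ifun ι a b u) (v : H) :
    ∃ w ∈ M, ∀ w' ∈ M, Ifun ι a b (v + w) ≤ Ifun ι a b (v + w') := by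
  have hκ : 0 < 1 - max a b / lam₂ := by
    rw [sub_pos, div_lt_one hlam₂]; exact hab
  have hne : ((fun w => Ifun ι a b (v + w)) '' (M : Set H)).Nonempty :=
    ⟨_, 0, M.zero_mem, rfl⟩
  have hbdd : BddBelow ((fun w => Ifun ι a b (v + w)) '' (M : Set H)) := by
    refine ⟨Ifun ι a b v - (‖v‖ + max a b * ‖ι v‖ * C) ^ 2 / (2 * (1 - max a b / lam₂)), ?_⟩
    rintro x ⟨w, hw, rfl⟩
    have h1 := coercive hlam₂ hM ha hb hC' v hw
    have h2 : -((‖v‖ + max a b * ‖ι v‖ * C) ^ 2 / (2 * (1 - max a b / lam₂))) ≤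
        (1 - max a b / lam₂) / 2 * ‖w‖ ^ 2 - (‖v‖ + max a b * ‖ι v‖ * C) * ‖w‖ := by
      rw [neg_le, ← sub_nonneg]
      have key : 0 ≤ ((1 - max a b / lam₂) * ‖w‖ - (‖v‖ + max a b * ‖ι v‖ * C)) ^ 2 :=
        sq_nonneg _
      have hκ2 : (0:ℝ) < 2 * (1 - max a b / lam₂) := by linarith
      have hfrac : (‖v‖ + max a b * ‖ι v‖ * C) ^ 2 / (2 * (1 - max a b / lam₂)) *
          (2 * (1 - max a b / lam₂)) = (‖v‖ + max a b * ‖ι v‖ * C) ^ 2 :=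
        div_mul_cancel₀ _ (ne_of_gt hκ2)
      nlinarith [key, hκ2, hfrac]
    linarith
  have hstep : ∀ n : ℕ, ∃ w, w ∈ M ∧ Ifun ι a b (v + w) < sInf ((fun w => Ifun ι a b (v + w)) '' (M : Set H)) + 1 / (n + 1) := by
    intro n
    have hpos : (0:ℝ) < 1 / (n + 1) := by positivity
    obtain ⟨x, hxS, hxlt⟩ := Real.lt_sInf_add_pos hne hpos
    obtain ⟨w, hw, rfl⟩ := hxS
    exact ⟨w, hw, hxlt⟩
  choose W hWmem hWlt using hstep
  have hlow : ∀ w ∈ M, sInf ((fun w => Ifun ι a b (v + w)) '' (M : Set H)) ≤ Ifun ι a b (v + w) :=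
    fun w hw => csInf_le hbdd ⟨w, hw, rfl⟩
  have hcauchy : CauchySeq W := by
    rw [Metric.cauchySeq_iff']
    intro ε hε
    obtain ⟨Nn, hNn⟩ := exists_nat_gt (8 / ((1 - max a b / lam₂) * ε ^ 2))
    refine ⟨Nn, fun n hn => ?_⟩
    have hmid := midpoint_est hlam₂ hM ha hb v (hWmem n) (hWmem Nn)
    have hmidM : (2⁻¹:ℝ) • (W n + W Nn) ∈ M := M.smul_mem _ (M.add_mem (hWmem n) (hWmem Nn))
    have h1 := hWlt n
    have h2 := hWlt Nn
    have h3 := hlow _ hmidM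
    have h5 : (1:ℝ)/((n:ℝ)+1) ≤ 1/((Nn:ℝ)+1) := by
      apply one_div_le_one_div_of_le (by positivity)
      have : (Nn:ℝ) ≤ n := by exact_mod_cast hn
      linarith
    have h4 : (1 - max a b / lam₂) / 4 * ‖W n - W Nn‖ ^ 2 ≤ 2 / ((Nn:ℝ)+1) := by
      have hh : (1 - max a b / lam₂) / 4 * ‖W n - W Nn‖ ^ 2 ≤ 1/((n:ℝ)+1) + 1/((Nn:ℝ)+1) := by
        linarith
      have h2y : (2:ℝ)/((Nn:ℝ)+1) = 1/((Nn:ℝ)+1) + 1/((Nn:ℝ)+1) := by ring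
      linarith [hh, h5, h2y]
    have hN1 : (0:ℝ) < (Nn:ℝ) + 1 := by positivity
    have h8 : 2/((Nn:ℝ)+1) < (1 - max a b / lam₂) * ε^2/4 := by
      have h9 : 8 / ((1 - max a b / lam₂) * ε^2) < (Nn:ℝ) + 1 := lt_trans hNn (by linarith)
      rw [div_lt_iff₀ (by positivity)] at h9
      rw [div_lt_div_iff₀ hN1 (by norm_num)]
      nlinarith [mul_pos hκ (pow_pos hε 2)]
    rw [dist_eq_norm]
    have hx2 : ‖W n - W Nn‖ ^ 2 < ε ^ 2 := by nlinarith [h4, h8, hκ]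
    nlinarith [hx2, norm_nonneg (W n - W Nn), hε]
  obtain ⟨w, hwt⟩ := cauchySeq_tendsto_of_complete hcauchy
  have hwM : w ∈ M := hMcl.mem_of_tendsto hwt (Filter.Eventually.of_forall hWmem)
  have htend : Filter.Tendsto (fun n => Ifun ι a b (v + W n)) Filter.atTop
      (nhds (Ifun ι a b (v + w))) := by
    have hc : Continuous fun u : H => Ifun ι a b (v + u) :=
      hcont.comp (continuous_const.add continuous_id)
    exact (hc.tendsto w).comp hwt
  have hFw_le : Ifun ι a b (v + w) ≤ sInf ((fun w => Ifun ι a b (v + w)) '' (M : Set H)) := by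
    have hlim : Filter.Tendsto
        (fun n : ℕ => sInf ((fun w => Ifun ι a b (v + w)) '' (M : Set H)) + 1 / ((n:ℝ) + 1))
        Filter.atTop (nhds (sInf ((fun w => Ifun ι a b (v + w)) '' (M : Set H)) + 0)) :=
      tendsto_const_nhds.add tendsto_one_div_add_atTop_nhds_zero_nat
    rw [add_zero] at hlim
    exact le_of_tendsto_of_tendsto' htend hlim fun n => (hWlt n).le
  exact ⟨w, hwM, fun w' hw' => hFw_le.trans (hlow w' hw')⟩

lemma key_est (hlam₂ : 0 < lam₂) (hM : ∀ w ∈ M, lam₂ * ‖ι w‖ ^ 2 ≤ ‖w‖ ^ 2)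
    (ha : 0 ≤ a) (hb : 0 ≤ b) {C : ℝ} (hC0 : 0 ≤ C) (hC' : ∀ u : H, ‖ι u‖ ≤ C * ‖u‖)
    {v w v' w' : H} (h1 : EL ι M a b v w) (h2 : EL ι M a' b' v' w') :
    (1 - max a b / lam₂) * ‖w' - w‖ ≤
      (1 + max a b * C ^ 2) * ‖v' - v‖ + C * ((|a' - a| + |b' - b|) * ‖ι (v' + w')‖) := by
  have hc0 : 0 ≤ max a b := le_trans ha (le_max_left a b)
  have hzM : w' - w ∈ M := M.sub_mem h2.1 h1.1
  have e1 := h1.2 (w' - w) hzM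
  have e2 := h2.2 (w' - w) hzM
  have eL : ⟪v' + w', w' - w⟫ - ⟪v + w, w' - w⟫ = ⟪v' - v, w' - w⟫ + ‖w' - w‖ ^ 2 := by
    rw [← inner_sub_left, show v' + w' - (v + w) = (v' - v) + (w' - w) from by abel,
      inner_add_left, real_inner_self_eq_norm_sq]
  have eR : ⟪Sop a' b' (ι (v' + w')), ι (w' - w)⟫ - ⟪Sop a b (ι (v + w)), ι (w' - w)⟫
      = ⟪Sop a b (ι (v' + w')) - Sop a b (ι (v + w)), ι (w' - w)⟫
      + ⟪Sop a' b' (ι (v' + w')) - Sop a b (ι (v' + w')), ι (w' - w)⟫ := by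
    rw [inner_sub_left, inner_sub_left]; ring
  have i3 : ‖ι (v' + w') - ι (v + w)‖ ≤ C * ‖v' - v‖ + ‖ι (w' - w)‖ := by
    rw [← LinearMap.map_sub, show v' + w' - (v + w) = (v' - v) + (w' - w) from by abel,
      LinearMap.map_add]
    exact (norm_add_le _ _).trans (add_le_add (hC' _) le_rfl)
  have bb1 : ⟪Sop a b (ι (v' + w')) - Sop a b (ι (v + w)), ι (w' - w)⟫ ≤
      (max a b * (C * ‖v' - v‖ + ‖ι (w' - w)‖)) * ‖ι (w' - w)‖ := by
    have i1 := real_inner_le_norm (Sop a b (ι (v' + w')) - Sop a b (ι (v + w))) (ι (w' - w))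
    have i2 := norm_Sop_sub_le ha hb (ι (v' + w')) (ι (v + w))
    have i4 : ‖Sop a b (ι (v' + w')) - Sop a b (ι (v + w))‖ ≤
        max a b * (C * ‖v' - v‖ + ‖ι (w' - w)‖) :=
      i2.trans (mul_le_mul_of_nonneg_left i3 hc0)
    exact i1.trans (mul_le_mul_of_nonneg_right i4 (norm_nonneg _))
  have bb2 : ⟪Sop a' b' (ι (v' + w')) - Sop a b (ι (v' + w')), ι (w' - w)⟫ ≤
      ((|a' - a| + |b' - b|) * ‖ι (v' + w')‖) * ‖ι (w' - w)‖ :=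
    (real_inner_le_norm _ _).trans
      (mul_le_mul_of_nonneg_right (norm_Sop_param a' b' a b _) (norm_nonneg _))
  have babs : -(‖v' - v‖ * ‖w' - w‖) ≤ ⟪v' - v, w' - w⟫ := by
    have := abs_real_inner_le_norm (v' - v) (w' - w)
    rw [abs_le] at this
    linarith [this.1]
  have hιz : ‖ι (w' - w)‖ ≤ C * ‖w' - w‖ := hC' _
  have hquad : max a b * ‖ι (w' - w)‖ ^ 2 ≤ max a b / lam₂ * ‖w' - w‖ ^ 2 :=
    quad_bound hlam₂ hM hc0 hzM
  have main : ‖w' - w‖ ^ 2 ≤ ‖v' - v‖ * ‖w' - w‖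
      + max a b * C * ‖v' - v‖ * ‖ι (w' - w)‖ + max a b * ‖ι (w' - w)‖ ^ 2
      + (|a' - a| + |b' - b|) * ‖ι (v' + w')‖ * ‖ι (w' - w)‖ := by
    linarith [e1, e2, eL, eR, bb1, bb2, babs]
  have m2 : max a b * C * ‖v' - v‖ * ‖ι (w' - w)‖ ≤
      max a b * C * ‖v' - v‖ * (C * ‖w' - w‖) :=
    mul_le_mul_of_nonneg_left hιz (mul_nonneg (mul_nonneg hc0 hC0) (norm_nonneg _))
  have m3 : (|a' - a| + |b' - b|) * ‖ι (v' + w')‖ * ‖ι (w' - w)‖ ≤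
      (|a' - a| + |b' - b|) * ‖ι (v' + w')‖ * (C * ‖w' - w‖) :=
    mul_le_mul_of_nonneg_left hιz
      (mul_nonneg (add_nonneg (abs_nonneg _) (abs_nonneg _)) (norm_nonneg _))
  have main2 : (1 - max a b / lam₂) * ‖w' - w‖ * ‖w' - w‖ ≤
      ((1 + max a b * C ^ 2) * ‖v' - v‖
        + C * ((|a' - a| + |b' - b|) * ‖ι (v' + w')‖)) * ‖w' - w‖ := by
    linarith [main, m2, m3, hquad]
  rcases eq_or_lt_of_le (norm_nonneg (w' - w)) with h0 | hpos
  · rw [← h0, mul_zero]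
    have r1 : (0:ℝ) ≤ (1 + max a b * C ^ 2) * ‖v' - v‖ :=
      mul_nonneg (by nlinarith [mul_nonneg hc0 (sq_nonneg C)]) (norm_nonneg _)
    have r2 : (0:ℝ) ≤ C * ((|a' - a| + |b' - b|) * ‖ι (v' + w')‖) :=
      mul_nonneg hC0 (mul_nonneg (add_nonneg (abs_nonneg _) (abs_nonneg _)) (norm_nonneg _))
    linarith
  · exact le_of_mul_le_mul_right main2 hpos

end Hilbert2

section Hilbert3
variable {H : Type*} [NormedAddCommGroup H] [InnerProductSpace ℝ H]
variable {ι : H →ₗ[ℝ] Lp ℝ 2 μ} {M : Submodule ℝ H} {a b : ℝ}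

lemma EL_smul {t : ℝ} (ht : 0 ≤ t) {v w : H} (h : EL ι M a b v w) :
    EL ι M a b (t • v) (t • w) := by
  refine ⟨M.smul_mem t h.1, fun z hz => ?_⟩
  have e : t • v + t • w = t • (v + w) := (smul_add t v w).symm
  rw [e, LinearMap.map_smul, Sop_smul ht, real_inner_smul_left, real_inner_smul_left,
    h.2 z hz]

end Hilbert3

end TauRed

open TauRed

theorem exists_tau_reduction
    {Ω : Type*} [MeasurableSpace Ω] (μ : Measure Ω)
    {H : Type*} [NormedAddCommGroup H] [InnerProductSpace ℝ H] [CompleteSpace H]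
    (ι : H →ₗ[ℝ] Lp ℝ 2 μ) (hι : Function.Injective ι)
    (C : ℝ) (hC : 0 < C) (hιC : ∀ u : H, ‖ι u‖ ≤ C * ‖u‖)
    (I : H → ℝ → ℝ → ℝ)
    (hI : ∀ u a b, I u a b = ‖u‖ ^ 2 / 2 -
      (∫ x, (b * (Lp.posPart (ι u)) x ^ 2 + a * (Lp.negPart (ι u)) x ^ 2) ∂μ) / 2)
    (lam₀ lam₁ lam₂ : ℝ) (hlam₀ : 0 < lam₀) (hlam₀₁ : lam₀ < lam₁) (hlam₁₂ : lam₁ < lam₂)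
    (N E M : Submodule ℝ H)
    (hNcl : IsClosed (N : Set H)) (hEcl : IsClosed (E : Set H)) (hMcl : IsClosed (M : Set H))
    (hNfd : FiniteDimensional ℝ N) (hEfd : FiniteDimensional ℝ E) (hEne : E ≠ ⊥)
    (horthNE : ∀ v ∈ N, ∀ y ∈ E, ⟪v, y⟫ = 0)
    (horthNM : ∀ v ∈ N, ∀ w ∈ M, ⟪v, w⟫ = 0)
    (horthEM : ∀ y ∈ E, ∀ w ∈ M, ⟪y, w⟫ = 0)
    (horthNE2 : ∀ v ∈ N, ∀ y ∈ E, ∫ x, (ι v) x * (ι y) x ∂μ = 0)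
    (horthNM2 : ∀ v ∈ N, ∀ w ∈ M, ∫ x, (ι v) x * (ι w) x ∂μ = 0)
    (horthEM2 : ∀ y ∈ E, ∀ w ∈ M, ∫ x, (ι y) x * (ι w) x ∂μ = 0)
    (hdirect : N ⊔ E ⊔ M = ⊤)
    (hNspec : ∀ v ∈ N, ‖v‖ ^ 2 ≤ lam₀ * ‖ι v‖ ^ 2)
    (hEspec : ∀ y ∈ E, ∀ u : H, ⟪y, u⟫ = lam₁ * ∫ x, (ι y) x * (ι u) x ∂μ)
    (hMspec : ∀ w ∈ M, lam₂ * ‖ι w‖ ^ 2 ≤ ‖w‖ ^ 2)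
    (hcompact : ∀ s : Set H, Bornology.IsBounded s →
      IsCompact (closure ((fun u => ι u) '' s)))
    :
    ∃ τ : ℝ → ℝ → H → H,
      (∀ a b, a ∈ Set.Ioo lam₀ lam₂ → b ∈ Set.Ioo lam₀ lam₂ → ∀ v ∈ N ⊔ E,
        τ a b v ∈ M ∧
        (∀ w ∈ M, I (v + τ a b v) a b ≤ I (v + w) a b) ∧
        (∀ w ∈ M, (∀ w' ∈ M, I (v + w) a b ≤ I (v + w') a b) → w = τ a b v) ∧
        (∀ w ∈ M, (w = τ a b v ↔ ∀ z ∈ M, ⟪v + w, z⟫ =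
          ∫ x, (b * (Lp.posPart (ι (v + w))) x - a * (Lp.negPart (ι (v + w))) x) *
            (ι z) x ∂μ)) ∧
        (∀ t : ℝ, 0 ≤ t → τ a b (t • v) = t • τ a b v)) ∧
      ContinuousOn (fun q : H × ℝ × ℝ => τ q.2.1 q.2.2 q.1)
        (((N ⊔ E : Submodule ℝ H) : Set H) ×ˢ (Set.Ioo lam₀ lam₂ ×ˢ Set.Ioo lam₀ lam₂)) ∧
      (∀ v ∈ N ⊔ E, τ lam₁ lam₁ v = 0) := by
  classical
  have hlam₂pos : 0 < lam₂ := lt_trans (lt_trans hlam₀ hlam₀₁) hlam₁₂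
  have hC0 : (0:ℝ) ≤ C := le_of_lt hC
  have hcontι : Continuous fun u : H => ι u := by
    have := (ι.mkContinuous C hιC).continuous
    exact this
  have hIeq : ∀ (u : H) (a b : ℝ), I u a b = Ifun ι a b u := by
    intro u a b
    rw [hI, Ifun, Gfun_eq_integral']
  have hgood : ∀ a b : ℝ, 0 ≤ a → 0 ≤ b → max a b < lam₂ → ∀ v : H,
      ∃ w, EL ι M a b v w := by
    intro a b ha hb hab v
    obtain ⟨w, hw, hmin⟩ := exists_min hlam₂pos hMspec hMcl ha hb hab hιC
      (Ifun_continuous a b hcontι) v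
    exact ⟨w, min_el ha hb hw hmin⟩
  obtain ⟨τ, hτEL⟩ : ∃ τ : ℝ → ℝ → H → H, ∀ a b : ℝ,
      ∀ _ : 0 ≤ a ∧ 0 ≤ b ∧ max a b < lam₂, ∀ v, EL ι M a b v (τ a b v) := by
    refine ⟨fun a b v => if h : 0 ≤ a ∧ 0 ≤ b ∧ max a b < lam₂ then
      (hgood a b h.1 h.2.1 h.2.2 v).choose else 0, ?_⟩
    intro a b h v
    simp only [dif_pos h]
    exact (hgood a b h.1 h.2.1 h.2.2 v).choose_spec
  refine ⟨τ, ?_, ?_, ?_⟩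
  · -- main properties for fixed (a, b)
    intro a b haI hbI v hv
    have ha : (0:ℝ) ≤ a := le_of_lt (lt_trans hlam₀ haI.1)
    have hb : (0:ℝ) ≤ b := le_of_lt (lt_trans hlam₀ hbI.1)
    have hab : max a b < lam₂ := max_lt haI.2 hbI.2
    have hcond : 0 ≤ a ∧ 0 ≤ b ∧ max a b < lam₂ := ⟨ha, hb, hab⟩
    have hel := hτEL a b hcond v
    have hκnn : (0:ℝ) ≤ 1 - max a b / lam₂ := by
      rw [sub_nonneg, div_le_one hlam₂pos]
      exact le_of_lt hab
    refine ⟨hel.1, ?_, ?_, ?_, ?_⟩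
    · intro w hw
      rw [hIeq, hIeq]
      have hgap := el_min_gap hlam₂pos hMspec ha hb hel hw
      have h0 : 0 ≤ (1 - max a b / lam₂) / 2 * ‖w - τ a b v‖ ^ 2 :=
        mul_nonneg (by linarith) (sq_nonneg _)
      linarith
    · intro w hw hmin
      have hmin' : ∀ w' ∈ M, Ifun ι a b (v + w) ≤ Ifun ι a b (v + w') := by
        intro w' hw'
        have := hmin w' hw'
        rwa [hIeq, hIeq] at this
      exact el_unique hlam₂pos hMspec ha hb hab (min_el ha hb hw hmin') hel
    · intro w hw
      constructor
      · rintro rfl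
        intro z hz
        rw [hel.2 z hz, inner_Sop]
      · intro hint
        have hwel : EL ι M a b v w := ⟨hw, fun z hz => by rw [hint z hz, ← inner_Sop]⟩
        exact el_unique hlam₂pos hMspec ha hb hab hwel hel
    · intro t ht
      exact el_unique hlam₂pos hMspec ha hb hab (hτEL a b hcond (t • v)) (EL_smul ht hel)
  · -- continuity
    intro q hq
    rw [Metric.continuousWithinAt_iff]
    intro ε hε
    have hqa : q.2.1 ∈ Set.Ioo lam₀ lam₂ := hq.2.1
    have hqb : q.2.2 ∈ Set.Ioo lam₀ lam₂ := hq.2.2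
    have hc₀ : max q.2.1 q.2.2 < lam₂ := max_lt hqa.2 hqb.2
    have hcondq : 0 ≤ q.2.1 ∧ 0 ≤ q.2.2 ∧ max q.2.1 q.2.2 < lam₂ :=
      ⟨le_of_lt (lt_trans hlam₀ hqa.1), le_of_lt (lt_trans hlam₀ hqb.1), hc₀⟩
    have hel_q := hτEL q.2.1 q.2.2 hcondq q.1
    have hκ₀ : (0:ℝ) < (lam₂ - max q.2.1 q.2.2) / (2 * lam₂) :=
      div_pos (by linarith) (by linarith)
    have hR₀ : (0:ℝ) ≤ ‖ι (q.1 + τ q.2.1 q.2.2 q.1)‖ := norm_nonneg _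
    have hQ0 : (0:ℝ) ≤ 1 + lam₂ * C ^ 2 + 2 * C * ‖ι (q.1 + τ q.2.1 q.2.2 q.1)‖ := by
      have h1 : (0:ℝ) ≤ lam₂ * C ^ 2 := mul_nonneg (le_of_lt hlam₂pos) (sq_nonneg C)
      have h2 : (0:ℝ) ≤ 2 * C * ‖ι (q.1 + τ q.2.1 q.2.2 q.1)‖ :=
        mul_nonneg (by linarith) hR₀
      linarith
    have hQκ : (0:ℝ) < (1 + lam₂ * C ^ 2 + 2 * C * ‖ι (q.1 + τ q.2.1 q.2.2 q.1)‖)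
        + (lam₂ - max q.2.1 q.2.2) / (2 * lam₂) := by linarith
    refine ⟨min ((lam₂ - max q.2.1 q.2.2) / 2)
      (ε * ((lam₂ - max q.2.1 q.2.2) / (2 * lam₂)) /
        ((1 + lam₂ * C ^ 2 + 2 * C * ‖ι (q.1 + τ q.2.1 q.2.2 q.1)‖)
          + (lam₂ - max q.2.1 q.2.2) / (2 * lam₂))),
      lt_min (by linarith) (div_pos (mul_pos hε hκ₀) hQκ), ?_⟩
    intro p hp hdist
    have hpa : p.2.1 ∈ Set.Ioo lam₀ lam₂ := hp.2.1
    have hpb : p.2.2 ∈ Set.Ioo lam₀ lam₂ := hp.2.2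
    have hcondp : 0 ≤ p.2.1 ∧ 0 ≤ p.2.2 ∧ max p.2.1 p.2.2 < lam₂ :=
      ⟨le_of_lt (lt_trans hlam₀ hpa.1), le_of_lt (lt_trans hlam₀ hpb.1),
        max_lt hpa.2 hpb.2⟩
    have hel_p := hτEL p.2.1 p.2.2 hcondp p.1
    have hkey := key_est hlam₂pos hMspec hcondp.1 hcondp.2.1 hC0 hιC hel_p hel_q
    -- distance component bounds
    have hd0 : (0:ℝ) ≤ dist p q := dist_nonneg
    have hdv : ‖q.1 - p.1‖ ≤ dist p q := by
      rw [show ‖q.1 - p.1‖ = dist p.1 q.1 from by rw [dist_eq_norm, norm_sub_rev],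
        Prod.dist_eq]
      exact le_max_left _ _
    have hd2' : dist p.2 q.2 ≤ dist p q := by
      rw [Prod.dist_eq]; exact le_max_right _ _
    have hda : |q.2.1 - p.2.1| ≤ dist p q := by
      rw [show |q.2.1 - p.2.1| = dist p.2.1 q.2.1 from by rw [Real.dist_eq, abs_sub_comm]]
      exact le_trans (by rw [Prod.dist_eq]; exact le_max_left _ _) hd2'
    have hdb : |q.2.2 - p.2.2| ≤ dist p q := by
      rw [show |q.2.2 - p.2.2| = dist p.2.2 q.2.2 from by rw [Real.dist_eq, abs_sub_comm]]
      exact le_trans (by rw [Prod.dist_eq]; exact le_max_right _ _) hd2'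
    -- p's coefficients stay in the good region
    have hdr : dist p q < (lam₂ - max q.2.1 q.2.2) / 2 :=
      lt_of_lt_of_le hdist (min_le_left _ _)
    have hpa2 : p.2.1 ≤ (max q.2.1 q.2.2 + lam₂) / 2 := by
      have h1 : p.2.1 - q.2.1 ≤ |q.2.1 - p.2.1| := by
        rw [abs_sub_comm]; exact le_abs_self _
      have h2 : q.2.1 ≤ max q.2.1 q.2.2 := le_max_left _ _
      linarith
    have hpb2 : p.2.2 ≤ (max q.2.1 q.2.2 + lam₂) / 2 := by
      have h1 : p.2.2 - q.2.2 ≤ |q.2.2 - p.2.2| := by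
        rw [abs_sub_comm]; exact le_abs_self _
      have h2 : q.2.2 ≤ max q.2.1 q.2.2 := le_max_right _ _
      linarith
    have hmax2 : max p.2.1 p.2.2 ≤ (max q.2.1 q.2.2 + lam₂) / 2 := max_le hpa2 hpb2
    have hmaxlam : max p.2.1 p.2.2 ≤ lam₂ := by linarith
    have hstep1 : (lam₂ - max q.2.1 q.2.2) / (2 * lam₂) ≤ 1 - max p.2.1 p.2.2 / lam₂ := by
      have h1 : max p.2.1 p.2.2 / lam₂ ≤ ((max q.2.1 q.2.2 + lam₂) / 2) / lam₂ :=
        (div_le_div_iff_of_pos_right hlam₂pos).mpr hmax2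
      have h2 : 1 - ((max q.2.1 q.2.2 + lam₂) / 2) / lam₂
          = (lam₂ - max q.2.1 q.2.2) / (2 * lam₂) := by
        field_simp
        ring
      linarith
    -- assemble
    rw [norm_sub_rev] at hkey
    have hstep3 : (lam₂ - max q.2.1 q.2.2) / (2 * lam₂) *
        ‖τ p.2.1 p.2.2 p.1 - τ q.2.1 q.2.2 q.1‖ ≤
        (1 + max p.2.1 p.2.2 * C ^ 2) * ‖q.1 - p.1‖ +
          C * ((|q.2.1 - p.2.1| + |q.2.2 - p.2.2|) * ‖ι (q.1 + τ q.2.1 q.2.2 q.1)‖) :=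
      le_trans (mul_le_mul_of_nonneg_right hstep1 (norm_nonneg _)) hkey
    have ht1 : (1 + max p.2.1 p.2.2 * C ^ 2) * ‖q.1 - p.1‖ ≤
        (1 + lam₂ * C ^ 2) * dist p q := by
      apply mul_le_mul _ hdv (norm_nonneg _) _
      · nlinarith [sq_nonneg C]
      · nlinarith [sq_nonneg C, mul_nonneg hcondp.1 (sq_nonneg C),
          le_trans hcondp.1 (le_max_left p.2.1 p.2.2)]
    have ht2 : C * ((|q.2.1 - p.2.1| + |q.2.2 - p.2.2|) * ‖ι (q.1 + τ q.2.1 q.2.2 q.1)‖) ≤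
        C * ((2 * dist p q) * ‖ι (q.1 + τ q.2.1 q.2.2 q.1)‖) := by
      apply mul_le_mul_of_nonneg_left _ hC0
      apply mul_le_mul_of_nonneg_right _ hR₀
      linarith
    have hstep5 : (lam₂ - max q.2.1 q.2.2) / (2 * lam₂) *
        ‖τ p.2.1 p.2.2 p.1 - τ q.2.1 q.2.2 q.1‖ ≤
        (1 + lam₂ * C ^ 2 + 2 * C * ‖ι (q.1 + τ q.2.1 q.2.2 q.1)‖) * dist p q := by
      nlinarith [hstep3, ht1, ht2]
    have hstep6 : (1 + lam₂ * C ^ 2 + 2 * C * ‖ι (q.1 + τ q.2.1 q.2.2 q.1)‖) * dist p q ≤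
        (1 + lam₂ * C ^ 2 + 2 * C * ‖ι (q.1 + τ q.2.1 q.2.2 q.1)‖) *
          (ε * ((lam₂ - max q.2.1 q.2.2) / (2 * lam₂)) /
            ((1 + lam₂ * C ^ 2 + 2 * C * ‖ι (q.1 + τ q.2.1 q.2.2 q.1)‖)
              + (lam₂ - max q.2.1 q.2.2) / (2 * lam₂))) :=
      mul_le_mul_of_nonneg_left (le_of_lt (lt_of_lt_of_le hdist (min_le_right _ _))) hQ0
    have hstep7 : (1 + lam₂ * C ^ 2 + 2 * C * ‖ι (q.1 + τ q.2.1 q.2.2 q.1)‖) *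
          (ε * ((lam₂ - max q.2.1 q.2.2) / (2 * lam₂)) /
            ((1 + lam₂ * C ^ 2 + 2 * C * ‖ι (q.1 + τ q.2.1 q.2.2 q.1)‖)
              + (lam₂ - max q.2.1 q.2.2) / (2 * lam₂))) <
        (lam₂ - max q.2.1 q.2.2) / (2 * lam₂) * ε := by
      rw [← mul_div_assoc, div_lt_iff₀ hQκ]
      nlinarith [mul_pos (mul_pos hκ₀ hκ₀) hε]
    rw [dist_eq_norm]
    have hfin : (lam₂ - max q.2.1 q.2.2) / (2 * lam₂) *
        ‖τ p.2.1 p.2.2 p.1 - τ q.2.1 q.2.2 q.1‖ <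
        (lam₂ - max q.2.1 q.2.2) / (2 * lam₂) * ε := by linarith
    exact (mul_lt_mul_iff_right₀ hκ₀).mp hfin
  · -- τ lam₁ lam₁ v = 0
    intro v hv
    have hlam₁pos : (0:ℝ) ≤ lam₁ := le_of_lt (lt_trans hlam₀ hlam₀₁)
    have hcond : 0 ≤ lam₁ ∧ 0 ≤ lam₁ ∧ max lam₁ lam₁ < lam₂ :=
      ⟨hlam₁pos, hlam₁pos, by rw [max_self]; exact hlam₁₂⟩
    have hel := hτEL lam₁ lam₁ hcond v
    have h0 : EL ι M lam₁ lam₁ v 0 := by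
      refine ⟨M.zero_mem, fun z hz => ?_⟩
      obtain ⟨n, hn, y, hy, rfl⟩ := Submodule.mem_sup.mp hv
      rw [add_zero, Sop_diag, real_inner_smul_left]
      have eadd : ⟪ι (n + y), ι z⟫ = ⟪ι n, ι z⟫ + ⟪ι y, ι z⟫ := by
        rw [LinearMap.map_add, inner_add_left]
      rw [eadd, inner_eq_integral, inner_eq_integral, horthNM2 n hn z hz, zero_add]
      rw [inner_add_left, horthNM n hn z hz, zero_add, hEspec y hy z]
    exact el_unique hlam₂pos hMspec hlam₁pos hlam₁pos hcond.2.2 hel h0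
end
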